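/- arXiv:2104.05672 — 7 statements merged into one kernel-verified Lean document; each statement's English description precedes it below -/
import Mathlib

section
/- Let n ≥ 1, N ≥ 1, let C be a real n×n matrix, and for k = 1,…,N let I^k : ℝ^{n_k} → ℝ^n be linear maps with transposes R^k = (I^k)^T, and let B^k be invertible real n_k×n_k matrices. Let g ∈ ℝ^n and suppose C · (Σ_{k=1}^N I^k (B^k)^{-1} R^k) g = g, i.e. C acts on g as the inverse of the additive Schwarz preconditioner. Let Δ^L > 0 and ω > 0 with N · ‖C‖ · ω ≤ 1, and let δs^k ∈ ℝ^{n_k} satisfy ‖I^k δs^k‖ ≤ ω Δ^L for every k. Define the local corrections s^k = −(B^k)^{-1} R^k g + δs^k and the preconditioned gradient g̃ = −C · Σ_{k=1}^N I^k s^k. Then g̃ = g − C · Σ_{k=1}^N I^k δs^k, and ‖g − g̃‖ ≤ N ‖C‖ ω Δ^L ≤ Δ^L. -/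
open RealInnerProductSpace

/-- Lemma 5.1 (trust-region approach): the preconditioned gradient built from local
ASPIN corrections (exact local Newton step plus trust-region remainder) stays within
the local trust-region radius of the true gradient. -/
theorem gaspin_trust_region_gradient_perturbation
    (n N : ℕ) (hn : 1 ≤ n) (hN : 1 ≤ N)
    (C : EuclideanSpace ℝ (Fin n) →L[ℝ] EuclideanSpace ℝ (Fin n))
    (nk : Fin N → ℕ)
    (I : ∀ k : Fin N, EuclideanSpace ℝ (Fin (nk k)) →L[ℝ] EuclideanSpace ℝ (Fin n))
    (B : ∀ k : Fin N, EuclideanSpace ℝ (Fin (nk k)) ≃L[ℝ] EuclideanSpace ℝ (Fin (nk k)))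
    (g : EuclideanSpace ℝ (Fin n))
    (hC : C (∑ k, I k ((B k).symm (ContinuousLinearMap.adjoint (I k) g))) = g)
    (ΔL ω : ℝ) (hΔL : 0 < ΔL) (hω : 0 < ω)
    (hωbound : (N : ℝ) * ‖C‖ * ω ≤ 1)
    (δs : ∀ k : Fin N, EuclideanSpace ℝ (Fin (nk k)))
    (hδs : ∀ k, ‖I k (δs k)‖ ≤ ω * ΔL)
    (s : ∀ k : Fin N, EuclideanSpace ℝ (Fin (nk k)))
    (hs : ∀ k, s k = -(B k).symm (ContinuousLinearMap.adjoint (I k) g) + δs k)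
    (gt : EuclideanSpace ℝ (Fin n))
    (hgt : gt = -(C (∑ k, I k (s k)))) :
    gt = g - C (∑ k, I k (δs k)) ∧
      ‖g - gt‖ ≤ (N : ℝ) * ‖C‖ * ω * ΔL ∧
      (N : ℝ) * ‖C‖ * ω * ΔL ≤ ΔL := by
  have h1 : gt = g - C (∑ k, I k (δs k)) := by
    rw [hgt]
    have : (∑ k, I k (s k)) = -(∑ k, I k ((B k).symm (ContinuousLinearMap.adjoint (I k) g))) + ∑ k, I k (δs k) := by
      rw [← Finset.sum_neg_distrib, ← Finset.sum_add_distrib]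
      exact Finset.sum_congr rfl fun k _ => by rw [hs k]; simp
    rw [this]
    simp [hC]
    abel
  refine ⟨h1, ?_, ?_⟩
  · have : g - gt = C (∑ k, I k (δs k)) := by rw [h1]; abel
    rw [this]
    calc ‖C (∑ k, I k (δs k))‖ ≤ ‖C‖ * ‖∑ k, I k (δs k)‖ := C.le_opNorm _
      _ ≤ ‖C‖ * ∑ k, ‖I k (δs k)‖ := by
          exact mul_le_mul_of_nonneg_left (norm_sum_le _ _) C.opNorm_nonneg
      _ ≤ ‖C‖ * ∑ _k : Fin N, ω * ΔL := by
          refine mul_le_mul_of_nonneg_left (Finset.sum_le_sum fun k _ => hδs k) C.opNorm_nonneg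
      _ = (N : ℝ) * ‖C‖ * ω * ΔL := by rw [Finset.sum_const, Finset.card_fin, nsmul_eq_mul]; ring
  · calc (N : ℝ) * ‖C‖ * ω * ΔL ≤ 1 * ΔL := by
          exact mul_le_mul_of_nonneg_right hωbound hΔL.le
      _ = ΔL := one_mul _
end

section
/- Let β₁ > β₂ > 0 and let g, g̃ ∈ ℝ^n, Δ^L > 0, Δ^G > 0. Assume ‖g̃ − g‖ ≤ Δ^L, that Δ^L ≤ (1 − √(β₂/β₁)) ‖g‖, and that ‖g̃‖ ≤ Δ^G and ‖g‖ ≤ Δ^G. Then β₁ · min{‖g̃‖², ‖g̃‖ Δ^G} ≥ β₂ · min{‖g‖², ‖g‖ Δ^G}. -/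
/-- Case 1 of Lemma 6.1: the extended sufficient decrease condition holds when both
gradient norms are at most the global trust-region radius and the local radius is
small enough relative to `‖g‖`. -/
theorem gaspin_extended_sufficient_decrease_case1
    {n : ℕ} (β₁ β₂ : ℝ) (hβ : β₂ < β₁) (hβ₂ : 0 < β₂)
    (g gt : EuclideanSpace ℝ (Fin n)) (ΔL ΔG : ℝ)
    (hΔL : 0 < ΔL) (hΔG : 0 < ΔG)
    (hpert : ‖gt - g‖ ≤ ΔL)
    (hsmall : ΔL ≤ (1 - Real.sqrt (β₂ / β₁)) * ‖g‖)
    (hgt : ‖gt‖ ≤ ΔG) (hg : ‖g‖ ≤ ΔG) :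
    β₁ * min (‖gt‖ ^ 2) (‖gt‖ * ΔG) ≥ β₂ * min (‖g‖ ^ 2) (‖g‖ * ΔG) := by
  have hβ₁ : 0 < β₁ := hβ₂.trans hβ
  set s := Real.sqrt (β₂ / β₁) with hs
  have hs0 : 0 ≤ s := Real.sqrt_nonneg _
  have hs2 : s ^ 2 = β₂ / β₁ := by
    rw [hs, sq, Real.mul_self_sqrt (by positivity)]
  -- lower bound on ‖gt‖
  have hdiff : ‖g‖ - ‖gt‖ ≤ ΔL := by
    have := norm_sub_norm_le g gt
    have h2 : ‖g - gt‖ = ‖gt - g‖ := norm_sub_rev _ _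
    linarith [h2 ▸ this, hpert]
  have hgt_lb : s * ‖g‖ ≤ ‖gt‖ := by nlinarith [hsmall, hdiff]
  have hgt_nn : (0:ℝ) ≤ ‖gt‖ := norm_nonneg _
  have hg_nn : (0:ℝ) ≤ ‖g‖ := norm_nonneg _
  have hmin1 : min (‖gt‖ ^ 2) (‖gt‖ * ΔG) = ‖gt‖ ^ 2 := by
    apply min_eq_left; nlinarith
  have hmin2 : min (‖g‖ ^ 2) (‖g‖ * ΔG) = ‖g‖ ^ 2 := by
    apply min_eq_left; nlinarith
  rw [hmin1, hmin2]
  have key : β₂ * ‖g‖ ^ 2 ≤ β₁ * (s * ‖g‖) ^ 2 := by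
    have : β₁ * s ^ 2 = β₂ := by rw [hs2]; field_simp
    nlinarith
  have : (s * ‖g‖) ^ 2 ≤ ‖gt‖ ^ 2 := pow_le_pow_left₀ (by positivity) hgt_lb 2
  nlinarith
end

section
/- Let β₁ > β₂ > 0 and let g, g̃ ∈ ℝ^n, Δ^L > 0, Δ^G > 0. Assume ‖g̃ − g‖ ≤ Δ^L, that Δ^L ≤ (1 − β₂/β₁) ‖g‖, and that ‖g̃‖ ≥ Δ^G and ‖g‖ ≥ Δ^G. Then β₁ · min{‖g̃‖², ‖g̃‖ Δ^G} ≥ β₂ · min{‖g‖², ‖g‖ Δ^G}. -/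
/-- Case 2 of Lemma 6.1: the extended sufficient decrease condition holds when both
gradient norms are at least the global trust-region radius and the local radius is
small enough relative to `‖g‖`. -/
theorem gaspin_extended_sufficient_decrease_case2
    {n : ℕ} (β₁ β₂ : ℝ) (hβ : β₂ < β₁) (hβ₂ : 0 < β₂)
    (g gt : EuclideanSpace ℝ (Fin n)) (ΔL ΔG : ℝ)
    (hΔL : 0 < ΔL) (hΔG : 0 < ΔG)
    (hpert : ‖gt - g‖ ≤ ΔL)
    (hsmall : ΔL ≤ (1 - β₂ / β₁) * ‖g‖)
    (hgt : ‖gt‖ ≥ ΔG) (hg : ‖g‖ ≥ ΔG) :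
    β₁ * min (‖gt‖ ^ 2) (‖gt‖ * ΔG) ≥ β₂ * min (‖g‖ ^ 2) (‖g‖ * ΔG) := by
  have hβ₁ : 0 < β₁ := hβ₂.trans hβ
  have h1 : ‖g‖ - ‖gt‖ ≤ ΔL := by
    have := norm_sub_norm_le g gt
    have h2 : ‖g - gt‖ = ‖gt - g‖ := norm_sub_rev g gt
    linarith
  have hkey : β₂ * ‖g‖ ≤ β₁ * ‖gt‖ := by
    have h : (β₂ / β₁) * ‖g‖ ≤ ‖gt‖ := by nlinarith
    rw [div_mul_eq_mul_div, div_le_iff₀ hβ₁] at h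
    linarith [h, mul_comm ‖gt‖ β₁]
  have e1 : min (‖gt‖ ^ 2) (‖gt‖ * ΔG) = ‖gt‖ * ΔG := by
    rw [min_eq_right]; nlinarith
  have e2 : min (‖g‖ ^ 2) (‖g‖ * ΔG) = ‖g‖ * ΔG := by
    rw [min_eq_right]; nlinarith
  rw [e1, e2]
  nlinarith
end

section
/- Let ε > 0, β₂ > 0, C_B > 0, and let Δ^G ∈ (0, ε] and Δ^L ∈ (0, Δ^G]. Let u, s, g, g̃, ḡ ∈ ℝ^n and let B be a symmetric n×n matrix with ‖B‖ ≤ C_B. Define ψ̃(s) = ⟨g̃, s⟩ + ½⟨s, B s⟩. Assume: ‖g‖ ≥ ε; ‖g̃ − g‖ ≤ Δ^L; ‖s‖ ≤ Δ^G; J : ℝ^n → ℝ satisfies J(u + s) − J(u) = ⟨ḡ, s⟩; and the sufficient decrease −ψ̃(s) ≥ β₂ · min{‖g‖², ‖g‖ Δ^G} holds. Then, with ρ̃ = (J(u) − J(u + s))/(−ψ̃(s)), one has β₂ ε |ρ̃ − 1| ≤ (C_B/2) Δ^G + ‖ḡ − g‖ + Δ^G. In particular, for any η ∈ (0,1), if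 additionally (C_B/2 + 1) Δ^G + ‖ḡ − g‖ ≤ (1 − η) β₂ ε, then ρ̃ ≥ η. -/
open RealInnerProductSpace

/-- Quantitative content of Lemma 6.2: the decrease ratio of the preconditioned
trust-region model converges to 1 as the global trust-region radius shrinks, so every
step is eventually accepted. -/
theorem gaspin_decrease_ratio_estimate
    {n : ℕ} (ε β₂ C_B ΔG ΔL : ℝ)
    (hε : 0 < ε) (hβ₂ : 0 < β₂) (hCB : 0 < C_B)
    (hΔG : 0 < ΔG) (hΔGε : ΔG ≤ ε) (hΔL : 0 < ΔL) (hΔLG : ΔL ≤ ΔG)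
    (u s g gt gbar : EuclideanSpace ℝ (Fin n))
    (B : EuclideanSpace ℝ (Fin n) →L[ℝ] EuclideanSpace ℝ (Fin n))
    (hBsymm : ∀ x y, ⟪B x, y⟫ = ⟪x, B y⟫)
    (hB : ‖B‖ ≤ C_B)
    (J : EuclideanSpace ℝ (Fin n) → ℝ)
    (hg : ‖g‖ ≥ ε)
    (hpert : ‖gt - g‖ ≤ ΔL)
    (hs : ‖s‖ ≤ ΔG)
    (hmv : J (u + s) - J u = ⟪gbar, s⟫)
    (hsd : -(⟪gt, s⟫ + (1 / 2) * ⟪s, B s⟫) ≥ β₂ * min (‖g‖ ^ 2) (‖g‖ * ΔG)) :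
    β₂ * ε * |(J u - J (u + s)) / (-(⟪gt, s⟫ + (1 / 2) * ⟪s, B s⟫)) - 1| ≤
        C_B / 2 * ΔG + ‖gbar - g‖ + ΔG ∧
      ∀ η : ℝ, 0 < η → η < 1 →
        (C_B / 2 + 1) * ΔG + ‖gbar - g‖ ≤ (1 - η) * β₂ * ε →
        (J u - J (u + s)) / (-(⟪gt, s⟫ + (1 / 2) * ⟪s, B s⟫)) ≥ η := by
  set m : ℝ := -(⟪gt, s⟫ + (1 / 2) * ⟪s, B s⟫) with hmdef
  -- lower bound on m
  have hmin : ε * ΔG ≤ min (‖g‖ ^ 2) (‖g‖ * ΔG) := by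
    refine le_min ?_ ?_
    · have h1 : ε * ΔG ≤ ‖g‖ * ‖g‖ := by
        apply mul_le_mul hg (le_trans hΔGε hg) hΔG.le (norm_nonneg g)
      calc ε * ΔG ≤ ‖g‖ * ‖g‖ := h1
        _ = ‖g‖ ^ 2 := (sq ‖g‖).symm
    · exact mul_le_mul_of_nonneg_right hg hΔG.le
  have hm : β₂ * ε * ΔG ≤ m := by
    calc β₂ * ε * ΔG = β₂ * (ε * ΔG) := by ring
      _ ≤ β₂ * min (‖g‖ ^ 2) (‖g‖ * ΔG) := by
          exact mul_le_mul_of_nonneg_left hmin hβ₂.le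
      _ ≤ m := hsd
  have hm0 : 0 < m := lt_of_lt_of_le (by positivity) hm
  -- numerator
  have hJ : J u - J (u + s) = -⟪gbar, s⟫ := by linarith
  set N : ℝ := ⟪gt, s⟫ + (1 / 2) * ⟪s, B s⟫ - ⟪gbar, s⟫ with hNdef
  have hNm : N = -⟪gbar, s⟫ - m := by rw [hNdef, hmdef]; ring
  have hratio : (J u - J (u + s)) / m - 1 = N / m := by
    rw [hJ, hNm, sub_div, div_self hm0.ne']
  have hNbound : |N| ≤ (ΔL + ‖gbar - g‖) * ΔG + C_B / 2 * ΔG ^ 2 := by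
    have h1 : ⟪gt, s⟫ - ⟪gbar, s⟫ = ⟪gt - gbar, s⟫ := (inner_sub_left _ _ _).symm
    have h2 : |⟪gt - gbar, s⟫| ≤ ‖gt - gbar‖ * ‖s‖ := abs_real_inner_le_norm _ _
    have h3 : ‖gt - gbar‖ ≤ ΔL + ‖gbar - g‖ := by
      calc ‖gt - gbar‖ = ‖(gt - g) - (gbar - g)‖ := by abel_nf
        _ ≤ ‖gt - g‖ + ‖gbar - g‖ := norm_sub_le _ _
        _ ≤ ΔL + ‖gbar - g‖ := by linarith
    have h4 : |⟪s, B s⟫| ≤ C_B * ΔG ^ 2 := by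
      calc |⟪s, B s⟫| ≤ ‖s‖ * ‖B s‖ := abs_real_inner_le_norm _ _
        _ ≤ ‖s‖ * (‖B‖ * ‖s‖) := by
            exact mul_le_mul_of_nonneg_left (B.le_opNorm s) (norm_nonneg s)
        _ ≤ ΔG * (C_B * ΔG) := by
            apply mul_le_mul hs ?_ (by positivity) hΔG.le
            exact mul_le_mul hB hs (norm_nonneg s) (le_trans (norm_nonneg B) hB)
        _ = C_B * ΔG ^ 2 := by ring
    have h5 : |⟪gt - gbar, s⟫| ≤ (ΔL + ‖gbar - g‖) * ΔG := by
      calc |⟪gt - gbar, s⟫| ≤ ‖gt - gbar‖ * ‖s‖ := h2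
        _ ≤ (ΔL + ‖gbar - g‖) * ΔG := by
            apply mul_le_mul h3 hs (norm_nonneg s) (by positivity)
    calc |N| = |⟪gt - gbar, s⟫ + (1 / 2) * ⟪s, B s⟫| := by rw [hNdef, ← h1]; ring_nf
      _ ≤ |⟪gt - gbar, s⟫| + |(1 / 2) * ⟪s, B s⟫| := abs_add_le _ _
      _ = |⟪gt - gbar, s⟫| + (1 / 2) * |⟪s, B s⟫| := by rw [abs_mul]; norm_num
      _ ≤ (ΔL + ‖gbar - g‖) * ΔG + (1 / 2) * (C_B * ΔG ^ 2) := by linarith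
      _ = (ΔL + ‖gbar - g‖) * ΔG + C_B / 2 * ΔG ^ 2 := by ring
  -- main estimate
  have hmain : β₂ * ε * |(J u - J (u + s)) / m - 1| ≤ C_B / 2 * ΔG + ‖gbar - g‖ + ΔG := by
    rw [hratio, abs_div, abs_of_pos hm0]
    have key : β₂ * ε * (|N| / m) ≤ |N| / ΔG := by
      rw [← mul_div_assoc, div_le_div_iff₀ hm0 hΔG]
      have : β₂ * ε * ΔG * |N| ≤ m * |N| :=
        mul_le_mul_of_nonneg_right hm (abs_nonneg N)
      nlinarith [abs_nonneg N]
    calc β₂ * ε * (|N| / m) ≤ |N| / ΔG := key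
      _ ≤ ((ΔL + ‖gbar - g‖) * ΔG + C_B / 2 * ΔG ^ 2) / ΔG := by
          gcongr
      _ = ΔL + ‖gbar - g‖ + C_B / 2 * ΔG := by
          field_simp
      _ ≤ C_B / 2 * ΔG + ‖gbar - g‖ + ΔG := by linarith
  refine ⟨hmain, ?_⟩
  intro η hη0 hη1 hcond
  have hbε : 0 < β₂ * ε := by positivity
  have h6 : β₂ * ε * |(J u - J (u + s)) / m - 1| ≤ (1 - η) * β₂ * ε := by
    calc β₂ * ε * |(J u - J (u + s)) / m - 1| ≤ C_B / 2 * ΔG + ‖gbar - g‖ + ΔG := hmain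
      _ = (C_B / 2 + 1) * ΔG + ‖gbar - g‖ := by ring
      _ ≤ (1 - η) * β₂ * ε := hcond
  have h7 : |(J u - J (u + s)) / m - 1| ≤ 1 - η := by
    nlinarith [abs_nonneg ((J u - J (u + s)) / m - 1)]
  have h8 := abs_le.mp h7
  linarith [h8.1]
end

section
/- Consider the globalized ASPIN iteration described in the context. Assume: J : ℝ^n → ℝ is continuously differentiable; the level set L = {u ∈ ℝ^n : J(u) ≤ J(u₀)} is compact; ‖∇J(u)‖ ≤ C_g for all u ∈ L for some C_g > 0; and ‖B_i‖ ≤ C_B for all i for some C_B > 0. Then the sequence of iterates satisfies liminf_{i→∞} ‖∇J(u_i)‖ = 0. -/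
open RealInnerProductSpace Filter

/-- The data of the globalized ASPIN iteration (Algorithm 2): parameters, iterates,
Hessian approximations, preconditioned gradients, corrections and the two
trust-region radii, together with the basic parameter constraints. -/
structure GAspin (n : ℕ) where
  /-- the objective function -/
  J : EuclideanSpace ℝ (Fin n) → ℝ
  γ₁ : ℝ
  γ₂ : ℝ
  η : ℝ
  β₁ : ℝ
  β₂ : ℝ
  hγ₁ : 0 < γ₁
  hγ₁' : γ₁ < 1
  hγ₂ : 1 < γ₂
  hη : 0 < η
  hη' : η < 1
  hβ : β₂ < β₁
  hβ₂ : 0 < β₂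
  /-- the iterates -/
  u : ℕ → EuclideanSpace ℝ (Fin n)
  /-- the symmetric Hessian approximations -/
  B : ℕ → EuclideanSpace ℝ (Fin n) →L[ℝ] EuclideanSpace ℝ (Fin n)
  /-- the preconditioned gradients -/
  gt : ℕ → EuclideanSpace ℝ (Fin n)
  /-- the corrections -/
  s : ℕ → EuclideanSpace ℝ (Fin n)
  /-- the global trust-region radii -/
  ΔG : ℕ → ℝ
  /-- the local trust-region radii -/
  ΔL : ℕ → ℝ
  hΔG : ∀ i, 0 < ΔG i
  hΔL : ∀ i, 0 < ΔL i
  hΔL0 : ΔL 0 ≤ ΔG 0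
  hBsymm : ∀ i, ∀ x y, ⟪B i x, y⟫ = ⟪x, B i y⟫

namespace GAspin

variable {n : ℕ} (A : GAspin n)

/-- The gradient `g_i = ∇J(u_i)` of the objective at the `i`-th iterate. -/
noncomputable def g (i : ℕ) : EuclideanSpace ℝ (Fin n) := gradient A.J (A.u i)

/-- The preconditioned quadratic model `ψ̃_i(s) = ⟨g̃_i, s⟩ + ½⟨s, B_i s⟩`. -/
noncomputable def psi (i : ℕ) (v : EuclideanSpace ℝ (Fin n)) : ℝ :=
  ⟪A.gt i, v⟫ + (1 / 2) * ⟪v, A.B i v⟫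

/-- The decrease ratio `ρ̃_i = (J(u_i) − J(u_i + s_i))/(−ψ̃_i(s_i))`. -/
noncomputable def rho (i : ℕ) : ℝ :=
  (A.J (A.u i) - A.J (A.u i + A.s i)) / (-(A.psi i (A.s i)))

/-- The extended sufficient decrease predicate `D_i`. -/
def D (i : ℕ) : Prop :=
  A.β₁ * min (‖A.gt i‖ ^ 2) (‖A.gt i‖ * A.ΔG i) ≥
    A.β₂ * min (‖A.g i‖ ^ 2) (‖A.g i‖ * A.ΔG i)

/-- Iteration `i` is successful if `ρ̃_i ≥ η` and `D_i` holds. -/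
def Succ (i : ℕ) : Prop := A.rho i ≥ A.η ∧ A.D i

end GAspin

/-! Suppose `‖∇J(u_i)‖ ≥ ε` for all large `i`. Uniform first-order Taylor expansion on the
compact level set shows that an iteration whose two radii are below some `δ(ε)` is successful.
As `ΔG` shrinks only after a failed ratio test and `ΔL_{i+1} ≤ ΔG_i`, this keeps `ΔG` above some
`c > 0`; every success then decreases `J` by at least `η β₂ min(ε², ε c)`, so, `J` being bounded
below on the level set, eventually every iteration fails. Then `u` is frozen, `ΔG` can shrink
only finitely often, hence eventually `ρ̃_i ≥ η` and `D_i` fails at every step; so `ΔL` decays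
geometrically, `g̃_i → g_i ≠ 0`, and `D_i` holds after all. -/

open Set Topology

theorem IsCompact.exists_pos_forall_norm_sub_fderiv_le {E F : Type*} [NormedAddCommGroup E]
    [NormedSpace ℝ E] [ProperSpace E] [NormedAddCommGroup F] [NormedSpace ℝ F] {f : E → F}
    (hf : ContDiff ℝ 1 f) {K : Set E} (hK : IsCompact K) {ε : ℝ} (hε : 0 < ε) :
    ∃ δ > 0, ∀ v ∈ K, ∀ w, ‖w‖ ≤ δ → ‖f (v + w) - f v - fderiv ℝ f v w‖ ≤ ε * ‖w‖ := by
  have huc : UniformContinuousOn (fderiv ℝ f) (Metric.cthickening 1 K) :=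
    hK.cthickening.uniformContinuousOn_of_continuous
      (hf.continuous_fderiv one_ne_zero).continuousOn
  obtain ⟨δ, hδ, hclose⟩ := Metric.uniformContinuousOn_iff_le.1 huc ε hε
  refine ⟨min δ 1, lt_min hδ one_pos, fun v hv w hw => ?_⟩
  have hball : Metric.closedBall v (min δ 1) ⊆ Metric.cthickening 1 K :=
    (Metric.closedBall_subset_cthickening hv _).trans
      (Metric.cthickening_mono (min_le_right _ _) K)
  have hv' : v ∈ Metric.closedBall v (min δ 1) :=
    Metric.mem_closedBall_self ((norm_nonneg w).trans hw)
  have hvw : v + w ∈ Metric.closedBall v (min δ 1) := by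
    rwa [Metric.mem_closedBall, dist_eq_norm, add_sub_cancel_left]
  have hbound : ∀ x ∈ Metric.closedBall v (min δ 1), ‖fderiv ℝ f x - fderiv ℝ f v‖ ≤ ε :=
    fun x hx => by
      rw [← dist_eq_norm]
      exact hclose x (hball hx) v (hball hv')
        ((Metric.mem_closedBall.1 hx).trans (min_le_left _ _))
  simpa only [add_sub_cancel_left] using
    (convex_closedBall v (min δ 1)).norm_image_sub_le_of_norm_fderiv_le'
      (fun x _ => (hf.differentiable one_ne_zero).differentiableAt) hbound hv' hvw

theorem Antitone.tendsto_sub_add_one_nhds_zero {a : ℕ → ℝ} (ha : Antitone a)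
    (hbdd : BddBelow (range a)) : Tendsto (fun i => a i - a (i + 1)) atTop (𝓝 0) := by
  have hlim := tendsto_atTop_ciInf ha hbdd
  simpa using hlim.sub ((tendsto_add_atTop_iff_nat 1).2 hlim)

theorem Real.tendsto_zero_of_eventually_le_mul {x : ℕ → ℝ} {γ : ℝ} (hx : ∀ i, 0 ≤ x i)
    (hγ : γ < 1) (hstep : ∀ᶠ i in atTop, x (i + 1) ≤ γ * x i) :
    Tendsto x atTop (𝓝 0) :=
  (summable_of_ratio_norm_eventually_le hγ (by
    simpa only [Real.norm_of_nonneg (hx _)] using hstep) : Summable x).tendsto_atTop_zero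

theorem exists_pos_forall_le_of_mul_le_add_one {x : ℕ → ℝ} {γ δ : ℝ} (hx : ∀ i, 0 < x i)
    (hγ : 0 < γ) (hδ : 0 < δ) (hstep : ∀ i, γ * x i ≤ x (i + 1))
    (hgrow : ∀ i, x i ≤ δ → x (i + 1) ≤ δ → x (i + 1) ≤ x (i + 2)) :
    ∃ c > 0, ∀ i, c ≤ x i := by
  set c := min (min (x 0) (x 1)) (γ ^ 2 * δ)
  have hc : 0 < c := lt_min (lt_min (hx 0) (hx 1)) (by positivity)
  have hpair : ∀ i, c ≤ x i ∧ c ≤ x (i + 1) := by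
    intro i
    induction i with
    | zero => exact ⟨(min_le_left _ _).trans (min_le_left _ _),
        (min_le_left _ _).trans (min_le_right _ _)⟩
    | succ i ih =>
      refine ⟨ih.2, ?_⟩
      have hcγδ : c ≤ γ ^ 2 * δ := min_le_right _ _
      have h₁ := hstep i
      have h₂ := hstep (i + 1)
      by_cases hi : x i ≤ δ
      · by_cases hi' : x (i + 1) ≤ δ
        · exact ih.2.trans (hgrow i hi hi')
        · nlinarith
      · nlinarith [hx i, hx (i + 1)]
  exact ⟨c, hc, fun i => (hpair i).1⟩

theorem liminf_eq_zero_of_frequently_lt {x : ℕ → ℝ} (hx : ∀ i, 0 ≤ x i)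
    (hfreq : ∀ ε > 0, ∃ᶠ i in atTop, x i < ε) : liminf x atTop = 0 := by
  have hcobdd : IsCoboundedUnder (· ≥ ·) atTop x :=
    IsCoboundedUnder.of_frequently_le ((hfreq 1 one_pos).mono fun _ => le_of_lt)
  refine le_antisymm (le_of_forall_pos_le_add fun ε hε => ?_)
    (le_liminf_of_le hcobdd (Eventually.of_forall hx))
  simpa using liminf_le_of_frequently_le ((hfreq ε hε).mono fun _ => le_of_lt)
    (isBoundedUnder_of ⟨0, hx⟩)

theorem mul_min_sq_mul_le_mul_min_sq_mul {β₁ β₂ a b Δ : ℝ} (hβ₂ : 0 < β₂) (hβ : β₂ ≤ β₁)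
    (hΔ : 0 ≤ Δ) (ha : 0 ≤ a) (hab : (β₁ + β₂) * a ≤ 2 * β₁ * b) :
    β₂ * min (a ^ 2) (a * Δ) ≤ β₁ * min (b ^ 2) (b * Δ) := by
  have hb : 0 ≤ b := by nlinarith
  have hlin : β₂ * a ≤ β₁ * b := by nlinarith
  have hsq : β₂ * a ^ 2 ≤ β₁ * b ^ 2 := by
    have := mul_le_mul hab hab (mul_nonneg (by linarith) ha) (by nlinarith)
    nlinarith [mul_nonneg (sq_nonneg (β₁ - β₂)) (sq_nonneg a)]
  rw [mul_min_of_nonneg _ _ hβ₂.le, mul_min_of_nonneg _ _ (hβ₂.le.trans hβ)]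
  exact min_le_min (by linarith) (by nlinarith)

namespace GAspin

variable {n : ℕ} (A : GAspin n)

theorem D_of_two_mul_norm_sub_le {i : ℕ}
    (h : 2 * A.β₁ * ‖A.gt i - A.g i‖ ≤ (A.β₁ - A.β₂) * ‖A.g i‖) : A.D i := by
  have hβ₁ : 0 < A.β₁ := A.hβ₂.trans A.hβ
  have hrev : ‖A.g i‖ - ‖A.gt i‖ ≤ ‖A.gt i - A.g i‖ := by
    simpa only [norm_sub_rev] using norm_sub_norm_le (A.g i) (A.gt i)
  exact mul_min_sq_mul_le_mul_min_sq_mul A.hβ₂ A.hβ.le (A.hΔG i).le (norm_nonneg _)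
    (by nlinarith)

theorem abs_sub_neg_psi_le {i : ℕ} {τ δ C_B : ℝ}
    (hmodel : |A.J (A.u i + A.s i) - A.J (A.u i) - ⟪A.g i, A.s i⟫| ≤ τ * ‖A.s i‖)
    (hB : ‖A.B i‖ ≤ C_B) (hdist : ‖A.gt i - A.g i‖ ≤ δ) (hs : ‖A.s i‖ ≤ δ) :
    |(A.J (A.u i) - A.J (A.u i + A.s i)) - -A.psi i (A.s i)| ≤
      (τ + δ + C_B * δ / 2) * ‖A.s i‖ := by
  have hsplit : (A.J (A.u i) - A.J (A.u i + A.s i)) - -A.psi i (A.s i) =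
      -(A.J (A.u i + A.s i) - A.J (A.u i) - ⟪A.g i, A.s i⟫) +
        ⟪A.gt i - A.g i, A.s i⟫ + ⟪A.s i, A.B i (A.s i)⟫ / 2 := by
    rw [psi, inner_sub_left]
    ring
  have hs0 := norm_nonneg (A.s i)
  have hgrad : |⟪A.gt i - A.g i, A.s i⟫| ≤ δ * ‖A.s i‖ :=
    (abs_real_inner_le_norm _ _).trans (mul_le_mul_of_nonneg_right hdist hs0)
  have hquad : |⟪A.s i, A.B i (A.s i)⟫| ≤ C_B * δ * ‖A.s i‖ :=
    (abs_real_inner_le_norm _ _).trans (by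
      nlinarith [(A.B i).le_opNorm (A.s i), norm_nonneg (A.B i), mul_nonneg hs0 hs0,
        mul_le_mul_of_nonneg_left hs (mul_nonneg (norm_nonneg (A.B i)) hs0),
        mul_le_mul_of_nonneg_right hB (mul_nonneg (hs0.trans hs) hs0)])
  rw [hsplit]
  refine (abs_add_three _ _ _).trans ?_
  rw [abs_neg, abs_div, abs_two]
  linarith

theorem le_rho_of_abs_sub_neg_psi_le {i : ℕ} (hpos : 0 < -A.psi i (A.s i))
    (h : |(A.J (A.u i) - A.J (A.u i + A.s i)) - -A.psi i (A.s i)| ≤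
      (1 - A.η) * -A.psi i (A.s i)) : A.η ≤ A.rho i := by
  rw [rho, le_div_iff₀ hpos]
  linarith [(abs_le.1 h).1]

theorem exists_pos_succ_of_radii_le (hJ : ContDiff ℝ 1 A.J)
    {K : Set (EuclideanSpace ℝ (Fin n))} (hK : IsCompact K) (hu : ∀ i, A.u i ∈ K)
    {C_B : ℝ} (hBb : ∀ i, ‖A.B i‖ ≤ C_B) (ha : ∀ i, ‖A.gt i - A.g i‖ ≤ A.ΔL i)
    (hb1 : ∀ i, ‖A.s i‖ ≤ A.ΔG i)
    (hb2 : ∀ i, -(A.psi i (A.s i)) ≥ A.β₁ * min (‖A.gt i‖ ^ 2) (‖A.gt i‖ * A.ΔG i))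
    {ε : ℝ} (hε : 0 < ε) :
    ∃ δ > 0, ∀ i, ε ≤ ‖A.g i‖ → A.ΔG i ≤ δ → A.ΔL i ≤ δ → A.Succ i := by
  have hβ₁ : 0 < A.β₁ := A.hβ₂.trans A.hβ
  have hCB : 0 ≤ C_B := (norm_nonneg _).trans (hBb 0)
  set τ := (1 - A.η) * A.β₁ * ε / 4
  have hτ : 0 < τ := by have := A.hη'; positivity
  obtain ⟨δ₀, hδ₀, htaylor⟩ := hK.exists_pos_forall_norm_sub_fderiv_le hJ hτ
  obtain ⟨δ, hδ, hδδ₀, hδβ, hδτ⟩ : ∃ δ > 0, δ ≤ δ₀ ∧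
      2 * A.β₁ * δ ≤ (A.β₁ - A.β₂) * ε ∧ (2 + C_B) * δ ≤ 2 * τ := by
    have hβ := A.hβ
    refine ⟨min δ₀ (min ((A.β₁ - A.β₂) * ε / (2 * A.β₁)) (2 * τ / (2 + C_B))), by positivity,
      min_le_left _ _, ?_, ?_⟩
    · rw [← le_div_iff₀' (by positivity)]
      exact (min_le_right _ _).trans (min_le_left _ _)
    · rw [← le_div_iff₀' (by positivity)]
      exact (min_le_right _ _).trans (min_le_right _ _)
  refine ⟨δ, hδ, fun i hg hG hL => ?_⟩
  have hdist : ‖A.gt i - A.g i‖ ≤ δ := (ha i).trans hL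
  have hrev : ‖A.g i‖ - ‖A.gt i‖ ≤ ‖A.gt i - A.g i‖ := by
    simpa only [norm_sub_rev] using norm_sub_norm_le (A.g i) (A.gt i)
  have hgt : ε / 2 ≤ ‖A.gt i‖ := by nlinarith [A.hβ₂]
  have hGgt : A.ΔG i ≤ ‖A.gt i‖ := by nlinarith [A.hβ₂]
  have hpred : A.β₁ * (ε / 2) * A.ΔG i ≤ -A.psi i (A.s i) := by
    have := hb2 i
    rw [min_eq_right (by nlinarith [norm_nonneg (A.gt i)])] at this
    nlinarith [mul_le_mul_of_nonneg_left hgt (mul_nonneg hβ₁.le (A.hΔG i).le)]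
  have hs : ‖A.s i‖ ≤ δ := (hb1 i).trans hG
  have hmodel : |A.J (A.u i + A.s i) - A.J (A.u i) - ⟪A.g i, A.s i⟫| ≤ τ * ‖A.s i‖ := by
    have := htaylor (A.u i) (hu i) (A.s i) (hs.trans hδδ₀)
    rw [← inner_gradient_left, Real.norm_eq_abs] at this
    exact this
  have herr : |(A.J (A.u i) - A.J (A.u i + A.s i)) - -A.psi i (A.s i)| ≤
      (1 - A.η) * -A.psi i (A.s i) := by
    refine (A.abs_sub_neg_psi_le hmodel (hBb i) hdist hs).trans ?_
    have hη : 0 ≤ 1 - A.η := by linarith [A.hη']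
    have hτG : 2 * τ * A.ΔG i = (1 - A.η) * (A.β₁ * (ε / 2) * A.ΔG i) := by ring
    have hcoef : τ + δ + C_B * δ / 2 ≤ 2 * τ := by linarith
    nlinarith [mul_le_mul hcoef (hb1 i) (norm_nonneg _) (by positivity),
      mul_le_mul_of_nonneg_left hpred hη]
  have hρ := A.le_rho_of_abs_sub_neg_psi_le
    (lt_of_lt_of_le (by have := A.hΔG i; positivity) hpred) herr
  have hβ : 0 ≤ A.β₁ - A.β₂ := by linarith [A.hβ]
  exact ⟨hρ, A.D_of_two_mul_norm_sub_le (by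
    nlinarith [mul_le_mul_of_nonneg_left hg hβ, mul_le_mul_of_nonneg_left hdist hβ₁.le])⟩

theorem J_add_one_le_of_succ
    (hb2 : ∀ i, -(A.psi i (A.s i)) ≥ A.β₁ * min (‖A.gt i‖ ^ 2) (‖A.gt i‖ * A.ΔG i))
    (hc1 : ∀ i, A.Succ i → A.u (i + 1) = A.u i + A.s i) {i : ℕ} (hS : A.Succ i) :
    A.J (A.u (i + 1)) ≤
      A.J (A.u i) - A.η * (A.β₂ * min (‖A.g i‖ ^ 2) (‖A.g i‖ * A.ΔG i)) := by
  obtain ⟨hρ, hD⟩ := hS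
  have hpred : A.β₂ * min (‖A.g i‖ ^ 2) (‖A.g i‖ * A.ΔG i) ≤ -A.psi i (A.s i) :=
    le_trans hD (hb2 i)
  -- `ρ̃_i = 0 < η` when the predicted decrease vanishes, so success forces it to be positive.
  have hpos : 0 < -A.psi i (A.s i) := by
    refine (hpred.trans' (mul_nonneg A.hβ₂.le ?_)).lt_of_ne fun h => ?_
    · exact le_min (sq_nonneg _) (mul_nonneg (norm_nonneg _) (A.hΔG i).le)
    · rw [ge_iff_le, rho, ← h, div_zero] at hρ
      exact hρ.not_gt A.hη
  have hdec := (le_div_iff₀ hpos).1 hρ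
  rw [hc1 i ⟨hρ, hD⟩]
  nlinarith [mul_le_mul_of_nonneg_left hpred A.hη.le]

theorem antitone_J_u
    (hb2 : ∀ i, -(A.psi i (A.s i)) ≥ A.β₁ * min (‖A.gt i‖ ^ 2) (‖A.gt i‖ * A.ΔG i))
    (hc1 : ∀ i, A.Succ i → A.u (i + 1) = A.u i + A.s i)
    (hc2 : ∀ i, ¬A.Succ i → A.u (i + 1) = A.u i) : Antitone fun i => A.J (A.u i) := by
  refine antitone_nat_of_succ_le fun i => ?_
  by_cases hS : A.Succ i
  · have hmin : 0 ≤ min (‖A.g i‖ ^ 2) (‖A.g i‖ * A.ΔG i) :=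
      le_min (sq_nonneg _) (mul_nonneg (norm_nonneg _) (A.hΔG i).le)
    linarith [A.J_add_one_le_of_succ hb2 hc1 hS, mul_nonneg A.hη.le (mul_nonneg A.hβ₂.le hmin)]
  · rw [hc2 i hS]

theorem mul_ΔG_le_ΔG_add_one (hd1 : ∀ i, A.Succ i → A.ΔG (i + 1) = A.γ₂ * A.ΔG i)
    (hd2 : ∀ i, A.rho i ≥ A.η → ¬A.D i → A.ΔG (i + 1) = A.ΔG i)
    (hd3 : ∀ i, ¬(A.rho i ≥ A.η) → A.ΔG (i + 1) = A.γ₁ * A.ΔG i) (i : ℕ) :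
    A.γ₁ * A.ΔG i ≤ A.ΔG (i + 1) := by
  have hG := A.hΔG i
  by_cases hρ : A.rho i ≥ A.η
  · by_cases hD : A.D i
    · rw [hd1 i ⟨hρ, hD⟩]
      nlinarith [A.hγ₁', A.hγ₂]
    · rw [hd2 i hρ hD]
      nlinarith [A.hγ₁']
  · rw [hd3 i hρ]

theorem ΔG_add_one_le_of_not_succ
    (hd2 : ∀ i, A.rho i ≥ A.η → ¬A.D i → A.ΔG (i + 1) = A.ΔG i)
    (hd3 : ∀ i, ¬(A.rho i ≥ A.η) → A.ΔG (i + 1) = A.γ₁ * A.ΔG i) {i : ℕ} (hS : ¬A.Succ i) :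
    A.ΔG (i + 1) ≤ A.ΔG i := by
  by_cases hρ : A.rho i ≥ A.η
  · rw [hd2 i hρ fun hD => hS ⟨hρ, hD⟩]
  · rw [hd3 i hρ]
    nlinarith [A.hΔG i, A.hγ₁']

theorem ΔL_add_one_le_ΔG (he1 : ∀ i, A.D i → A.ΔL (i + 1) = min (A.ΔG i) (A.γ₂ * A.ΔL i))
    (he2 : ∀ i, ¬A.D i → A.ΔL (i + 1) = min (A.ΔG i) (A.γ₁ * A.ΔL i)) (i : ℕ) :
    A.ΔL (i + 1) ≤ A.ΔG i := by
  by_cases hD : A.D i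
  · exact (he1 i hD).trans_le (min_le_left _ _)
  · exact (he2 i hD).trans_le (min_le_left _ _)

theorem exists_pos_forall_le_ΔG (hd1 : ∀ i, A.Succ i → A.ΔG (i + 1) = A.γ₂ * A.ΔG i)
    (hd2 : ∀ i, A.rho i ≥ A.η → ¬A.D i → A.ΔG (i + 1) = A.ΔG i)
    (hd3 : ∀ i, ¬(A.rho i ≥ A.η) → A.ΔG (i + 1) = A.γ₁ * A.ΔG i)
    (he1 : ∀ i, A.D i → A.ΔL (i + 1) = min (A.ΔG i) (A.γ₂ * A.ΔL i))
    (he2 : ∀ i, ¬A.D i → A.ΔL (i + 1) = min (A.ΔG i) (A.γ₁ * A.ΔL i)) {N : ℕ} {δ : ℝ}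
    (hδ : 0 < δ) (hsucc : ∀ i, N ≤ i → A.ΔG i ≤ δ → A.ΔL i ≤ δ → A.Succ i) :
    ∃ c > 0, ∀ i, N ≤ i → c ≤ A.ΔG i := by
  obtain ⟨c, hc, hle⟩ := exists_pos_forall_le_of_mul_le_add_one (x := fun k => A.ΔG (N + k))
    (fun _ => A.hΔG _) A.hγ₁ hδ (fun k => A.mul_ΔG_le_ΔG_add_one hd1 hd2 hd3 (N + k))
    fun k hk hk' => by
      have hS : A.Succ (N + k + 1) :=
        hsucc _ (by omega) hk' ((A.ΔL_add_one_le_ΔG he1 he2 _).trans hk)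
      show A.ΔG (N + k + 1) ≤ A.ΔG (N + k + 1 + 1)
      rw [hd1 _ hS]
      nlinarith [A.hΔG (N + k + 1), A.hγ₂]
  refine ⟨c, hc, fun i hi => ?_⟩
  obtain ⟨k, rfl⟩ := Nat.exists_eq_add_of_le hi
  exact hle k

theorem eventually_not_succ
    (hb2 : ∀ i, -(A.psi i (A.s i)) ≥ A.β₁ * min (‖A.gt i‖ ^ 2) (‖A.gt i‖ * A.ΔG i))
    (hc1 : ∀ i, A.Succ i → A.u (i + 1) = A.u i + A.s i)
    (hanti : Antitone fun i => A.J (A.u i)) (hbdd : BddBelow (range fun i => A.J (A.u i)))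
    {N : ℕ} {ε c : ℝ} (hε : 0 < ε) (hc : 0 < c) (hg : ∀ i, N ≤ i → ε ≤ ‖A.g i‖)
    (hG : ∀ i, N ≤ i → c ≤ A.ΔG i) : ∀ᶠ i in atTop, ¬A.Succ i := by
  have hr : 0 < A.η * (A.β₂ * min (ε ^ 2) (ε * c)) :=
    mul_pos A.hη (mul_pos A.hβ₂ (lt_min (by positivity) (by positivity)))
  filter_upwards [(hanti.tendsto_sub_add_one_nhds_zero hbdd).eventually (gt_mem_nhds hr),
    eventually_ge_atTop N] with i hdec hi hS
  have hmin : min (ε ^ 2) (ε * c) ≤ min (‖A.g i‖ ^ 2) (‖A.g i‖ * A.ΔG i) :=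
    min_le_min (pow_le_pow_left₀ hε.le (hg i hi) 2)
      (mul_le_mul (hg i hi) (hG i hi) hc.le (norm_nonneg _))
  have := mul_le_mul_of_nonneg_left (mul_le_mul_of_nonneg_left hmin A.hβ₂.le) A.hη.le
  linarith [A.J_add_one_le_of_succ hb2 hc1 hS]

theorem exists_succ_ge_of_g_ne_zero (ha : ∀ i, ‖A.gt i - A.g i‖ ≤ A.ΔL i)
    (hc2 : ∀ i, ¬A.Succ i → A.u (i + 1) = A.u i)
    (hd2 : ∀ i, A.rho i ≥ A.η → ¬A.D i → A.ΔG (i + 1) = A.ΔG i)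
    (hd3 : ∀ i, ¬(A.rho i ≥ A.η) → A.ΔG (i + 1) = A.γ₁ * A.ΔG i)
    (he2 : ∀ i, ¬A.D i → A.ΔL (i + 1) = min (A.ΔG i) (A.γ₁ * A.ΔL i)) {M : ℕ} {c : ℝ}
    (hc : 0 < c) (hgM : A.g M ≠ 0) (hG : ∀ i, M ≤ i → c ≤ A.ΔG i) :
    ∃ i, M ≤ i ∧ A.Succ i := by
  by_contra! hfail
  have hg : ∀ i, M ≤ i → A.g i = A.g M := by
    intro i hi
    induction i, hi using Nat.le_induction with
    | base => rfl
    | succ i hi ih => rw [← ih, g, g, hc2 i (hfail i hi)]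
  -- `ΔG ≥ c` is nonincreasing, so its decrements tend to `0`, while a failed ratio test
  -- would shrink it by at least `(1 - γ₁) c`.
  have hρ : ∀ᶠ i in atTop, A.rho i ≥ A.η := by
    have hanti : Antitone fun k => A.ΔG (k + M) := antitone_nat_of_succ_le fun k => by
      simpa only [add_right_comm] using
        A.ΔG_add_one_le_of_not_succ hd2 hd3 (hfail (k + M) (by omega))
    have hbdd : BddBelow (range fun k => A.ΔG (k + M)) :=
      ⟨c, forall_mem_range.2 fun k => hG _ (by omega)⟩
    have hshrink := (hanti.tendsto_sub_add_one_nhds_zero hbdd).eventually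
      (gt_mem_nhds (mul_pos (sub_pos.2 A.hγ₁') hc))
    rw [← map_add_atTop_eq_nat M, eventually_map]
    filter_upwards [hshrink] with k hk
    by_contra hρk
    rw [add_right_comm, hd3 _ hρk] at hk
    nlinarith [hG (k + M) (by omega), A.hγ₁']
  have hnD : ∀ᶠ i in atTop, ¬A.D i := by
    filter_upwards [hρ, eventually_ge_atTop M] with i hρi hi hD
    exact hfail i hi ⟨hρi, hD⟩
  have hL : Tendsto A.ΔL atTop (𝓝 0) :=
    Real.tendsto_zero_of_eventually_le_mul (fun i => (A.hΔL i).le) A.hγ₁'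
      (hnD.mono fun i hi => (he2 i hi).trans_le (min_le_right _ _))
  have hsmall : ∀ᶠ i in atTop, 2 * A.β₁ * A.ΔL i < (A.β₁ - A.β₂) * ‖A.g M‖ := by
    have hpos : 0 < (A.β₁ - A.β₂) * ‖A.g M‖ := mul_pos (sub_pos.2 A.hβ) (norm_pos_iff.2 hgM)
    simpa using (hL.const_mul (2 * A.β₁)).eventually (gt_mem_nhds (by simpa using hpos))
  obtain ⟨i, hi, hnDi, hsmalli⟩ := ((eventually_ge_atTop M).and (hnD.and hsmall)).exists
  refine hnDi (A.D_of_two_mul_norm_sub_le ?_)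
  have hdist := ha i
  rw [hg i hi] at hdist ⊢
  nlinarith [mul_le_mul_of_nonneg_left hdist (A.hβ₂.trans A.hβ).le]

end GAspin

theorem gaspin_liminf_gradient_zero_general {n : ℕ} (A : GAspin n)
    (hJ : ContDiff ℝ 1 A.J)
    (hcompact : IsCompact {v : EuclideanSpace ℝ (Fin n) | A.J v ≤ A.J (A.u 0)})
    (C_B : ℝ) (hBb : ∀ i, ‖A.B i‖ ≤ C_B)
    (ha : ∀ i, ‖A.gt i - A.g i‖ ≤ A.ΔL i)
    (hb1 : ∀ i, ‖A.s i‖ ≤ A.ΔG i)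
    (hb2 : ∀ i, -(A.psi i (A.s i)) ≥ A.β₁ * min (‖A.gt i‖ ^ 2) (‖A.gt i‖ * A.ΔG i))
    (hc1 : ∀ i, A.Succ i → A.u (i + 1) = A.u i + A.s i)
    (hc2 : ∀ i, ¬A.Succ i → A.u (i + 1) = A.u i)
    (hd1 : ∀ i, A.Succ i → A.ΔG (i + 1) = A.γ₂ * A.ΔG i)
    (hd2 : ∀ i, A.rho i ≥ A.η → ¬A.D i → A.ΔG (i + 1) = A.ΔG i)
    (hd3 : ∀ i, ¬(A.rho i ≥ A.η) → A.ΔG (i + 1) = A.γ₁ * A.ΔG i)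
    (he1 : ∀ i, A.D i → A.ΔL (i + 1) = min (A.ΔG i) (A.γ₂ * A.ΔL i))
    (he2 : ∀ i, ¬A.D i → A.ΔL (i + 1) = min (A.ΔG i) (A.γ₁ * A.ΔL i)) :
    Filter.liminf (fun i => ‖A.g i‖) Filter.atTop = 0 := by
  have hanti := A.antitone_J_u hb2 hc1 hc2
  have hu : ∀ i, A.u i ∈ {v | A.J v ≤ A.J (A.u 0)} := fun i => hanti (Nat.zero_le i)
  have hbdd : BddBelow (range fun i => A.J (A.u i)) :=
    (hcompact.bddBelow_image hJ.continuous.continuousOn).mono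
      (range_subset_iff.2 fun i => mem_image_of_mem _ (hu i))
  refine liminf_eq_zero_of_frequently_lt (fun i => norm_nonneg _) fun ε hε => ?_
  by_contra hfreq
  obtain ⟨N, hN⟩ := eventually_atTop.1 (not_frequently.1 hfreq)
  replace hN : ∀ i, N ≤ i → ε ≤ ‖A.g i‖ := fun i hi => not_lt.1 (hN i hi)
  obtain ⟨δ, hδ, hsucc⟩ := A.exists_pos_succ_of_radii_le hJ hcompact hu hBb ha hb1 hb2 hε
  obtain ⟨c, hc, hG⟩ := A.exists_pos_forall_le_ΔG hd1 hd2 hd3 he1 he2 hδ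
    fun i hi => hsucc i (hN i hi)
  obtain ⟨M, hM⟩ := eventually_atTop.1 (A.eventually_not_succ hb2 hc1 hanti hbdd hε hc hN hG)
  obtain ⟨i, hi, hS⟩ := A.exists_succ_ge_of_g_ne_zero ha hc2 hd2 hd3 he2 (M := max M N) hc
    (norm_pos_iff.1 (hε.trans_le (hN _ (le_max_right M N))))
    fun i hi => hG i ((le_max_right M N).trans hi)
  exact hM i ((le_max_left M N).trans hi) hS

/-- Theorem 6.1 of the paper: under the standard trust-region assumptions, the
globalized ASPIN iteration satisfies `liminf_{i→∞} ‖∇J(u_i)‖ = 0`. -/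
theorem gaspin_liminf_gradient_zero {n : ℕ} (A : GAspin n)
    (hJ : ContDiff ℝ 1 A.J)
    (hcompact : IsCompact {v : EuclideanSpace ℝ (Fin n) | A.J v ≤ A.J (A.u 0)})
    (C_g : ℝ) (hCg : 0 < C_g)
    (hgb : ∀ v, A.J v ≤ A.J (A.u 0) → ‖gradient A.J v‖ ≤ C_g)
    (C_B : ℝ) (hCB : 0 < C_B) (hBb : ∀ i, ‖A.B i‖ ≤ C_B)
    (ha : ∀ i, ‖A.gt i - A.g i‖ ≤ A.ΔL i)
    (hb1 : ∀ i, ‖A.s i‖ ≤ A.ΔG i)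
    (hb2 : ∀ i, -(A.psi i (A.s i)) ≥ A.β₁ * min (‖A.gt i‖ ^ 2) (‖A.gt i‖ * A.ΔG i))
    (hc1 : ∀ i, A.Succ i → A.u (i + 1) = A.u i + A.s i)
    (hc2 : ∀ i, ¬A.Succ i → A.u (i + 1) = A.u i)
    (hd1 : ∀ i, A.Succ i → A.ΔG (i + 1) = A.γ₂ * A.ΔG i)
    (hd2 : ∀ i, A.rho i ≥ A.η → ¬A.D i → A.ΔG (i + 1) = A.ΔG i)
    (hd3 : ∀ i, ¬(A.rho i ≥ A.η) → A.ΔG (i + 1) = A.γ₁ * A.ΔG i)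
    (he1 : ∀ i, A.D i → A.ΔL (i + 1) = min (A.ΔG i) (A.γ₂ * A.ΔL i))
    (he2 : ∀ i, ¬A.D i → A.ΔL (i + 1) = min (A.ΔG i) (A.γ₁ * A.ΔL i)) :
    Filter.liminf (fun i => ‖A.g i‖) Filter.atTop = 0 :=
  gaspin_liminf_gradient_zero_general A hJ hcompact C_B hBb ha hb1 hb2 hc1 hc2 hd1 hd2 hd3 he1 he2
end

section
/- Consider the globalized ASPIN iteration described in the context. Assume: J : ℝ^n → ℝ is continuously differentiable; the level set L = {u ∈ ℝ^n : J(u) ≤ J(u₀)} is compact; ‖∇J(u)‖ ≤ C_g for all u ∈ L for some C_g > 0; and ‖B_i‖ ≤ C_B for all i for some C_B > 0. Then the sequence of iterates converges to first-order criticality: lim_{i→∞} ‖∇J(u_i)‖ = 0. -/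
/-!
A successful step decreases `J` by at least `η β₂ min{‖g_i‖², ‖g_i‖ Δ^G_i}`, so `J(u_i)` is
nonincreasing and converges, the iterates staying in the compact level set.

Suppose `‖g_i‖ ≥ ε` from some point on. Then `Δ^G_i → 0`: with infinitely many successes, the
vanishing decrease of `J` keeps the successful radii small and only they enlarge `Δ^G`; with
finitely many, the iterate freezes, and rejections with `ρ̃_i ≥ η` cannot go on forever, since they
shrink `Δ^L_i`, hence `g̃_i → g_i`, until `D_i` holds (`β₁ > β₂`); so `Δ^G` is shrunk by `γ₁`
infinitely often. But once `Δ^G_i` and `Δ^L_i ≤ Δ^G_{i-1}` are small, `D_i` holds and the model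
error is `o(Δ^G_i)` while `-ψ̃_i(s_i) ≳ ε Δ^G_i`, so every step succeeds and `Δ^G` grows: a
contradiction. Hence `liminf ‖g_i‖ = 0`.

For the full limit: while `‖g_i‖ ≥ ε`, each step has length at most `(η β₂ ε)⁻¹` times the
decrease of `J`, so late in the run the iterates cannot travel from a point with `‖g‖ ≥ 2ε` to one
with `‖g‖ < ε`, by uniform continuity of `∇J` on the level set.
-/

open RealInnerProductSpace Filter

open Topology

theorem IsCompact.exists_forall_norm_sub_sub_fderiv_le {E F : Type*}
    [NormedAddCommGroup E] [NormedSpace ℝ E] [NormedAddCommGroup F] [NormedSpace ℝ F]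
    {f : E → F} (hf : ContDiff ℝ 1 f) {K : Set E} (hK : IsCompact K) {δ : ℝ} (hδ : 0 < δ) :
    ∃ r > 0, ∀ x ∈ K, ∀ h, ‖h‖ < r → ‖f (x + h) - f x - fderiv ℝ f x h‖ ≤ δ * ‖h‖ := by
  obtain ⟨r, hr, hclose⟩ := Metric.mem_uniformity_dist.1 <|
    hK.uniformContinuousAt_of_continuousAt (fderiv ℝ f)
      (fun x _ => (hf.continuous_fderiv one_ne_zero).continuousAt) (Metric.dist_mem_uniformity hδ)
  refine ⟨r, hr, fun x hx h hh => ?_⟩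
  have hbound : ∀ y ∈ Metric.ball x r, ‖fderiv ℝ f y - fderiv ℝ f x‖ ≤ δ := fun y hy => by
    rw [← dist_eq_norm, dist_comm]
    exact (hclose (by rwa [dist_comm]) hx).le
  have hmem : x + h ∈ Metric.ball x r := by simpa using hh
  simpa using (convex_ball x r).norm_image_sub_le_of_norm_fderiv_le'
    (fun y _ => (hf.differentiable one_ne_zero).differentiableAt) hbound
    (Metric.mem_ball_self hr) hmem

theorem eventually_atTop_of_frequently_of_imp_succ {p : ℕ → Prop}
    (hstep : ∀ᶠ i in atTop, p i → p (i + 1)) (hfreq : ∃ᶠ i in atTop, p i) :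
    ∀ᶠ i in atTop, p i := by
  obtain ⟨N, hN⟩ := eventually_atTop.1 hstep
  obtain ⟨j, hjN, hj⟩ := frequently_atTop.1 hfreq N
  refine eventually_atTop.2 ⟨j, fun i hji => ?_⟩
  induction i, hji using Nat.le_induction with
  | base => exact hj
  | succ i hji ih => exact hN i (hjN.trans hji) ih

theorem tendsto_zero_of_frequently_le_mul {x : ℕ → ℝ} {c : ℝ} (hc : c < 1) (hx : ∀ i, 0 ≤ x i)
    (hanti : ∀ᶠ i in atTop, x (i + 1) ≤ x i) (hfreq : ∃ᶠ i in atTop, x (i + 1) ≤ c * x i) :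
    Tendsto x atTop (𝓝 0) := by
  obtain ⟨N, hN⟩ := eventually_atTop.1 hanti
  have htail : Antitone fun k => x (k + N) :=
    antitone_nat_of_succ_le fun k => by simpa [Nat.add_right_comm] using hN (k + N) le_add_self
  have hbdd : BddBelow (Set.range fun k => x (k + N)) := ⟨0, Set.forall_mem_range.2 fun _ => hx _⟩
  obtain ⟨ℓ, hℓ⟩ : ∃ ℓ, Tendsto x atTop (𝓝 ℓ) :=
    ⟨_, (tendsto_add_atTop_iff_nat N).1 (tendsto_atTop_ciInf htail hbdd)⟩
  have hℓ0 : 0 ≤ ℓ := ge_of_tendsto' hℓ hx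
  have hℓc : ℓ ≤ c * ℓ := le_of_tendsto_of_tendsto_of_frequently
    ((tendsto_add_atTop_iff_nat 1).2 hℓ) (hℓ.const_mul c) hfreq
  obtain rfl : ℓ = 0 := by nlinarith
  exact hℓ

theorem not_tendsto_zero_of_eventually_le_succ {x : ℕ → ℝ} (hx : ∀ i, 0 < x i)
    (hmono : ∀ᶠ i in atTop, x i ≤ x (i + 1)) : ¬Tendsto x atTop (𝓝 0) := by
  intro hlim
  obtain ⟨N, hN⟩ := eventually_atTop.1 hmono
  have hge : ∀ i, N ≤ i → x N ≤ x i := fun i hi => by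
    induction i, hi using Nat.le_induction with
    | base => exact le_rfl
    | succ i hi ih => exact ih.trans (hN i hi)
  exact (hx N).not_ge (ge_of_tendsto hlim (eventually_atTop.2 ⟨N, hge⟩))

theorem mul_dist_le_sub_of_mul_dist_succ_le {α : Type*} [PseudoMetricSpace α] {u : ℕ → α}
    {f : ℕ → ℝ} {c : ℝ} (hc : 0 ≤ c) {m l : ℕ} (hml : m ≤ l)
    (hstep : ∀ j, m ≤ j → j < l → c * dist (u (j + 1)) (u j) ≤ f j - f (j + 1)) :
    c * dist (u l) (u m) ≤ f m - f l := by
  induction l, hml using Nat.le_induction with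
  | base => simp
  | succ l hml ih =>
    have hlast := hstep l hml l.lt_succ_self
    have hprev := ih fun j hmj hjl => hstep j hmj (hjl.trans l.lt_succ_self)
    have htri := mul_le_mul_of_nonneg_left (dist_triangle (u (l + 1)) (u l) (u m)) hc
    linarith

/-- Between an index where `φ ∘ u` is large and the next one where it is small, `u` travels only
a short distance, which uniform continuity of `φ` forbids. -/
theorem tendsto_zero_of_frequently_lt_of_eventually_dist_lt {α : Type*} [PseudoMetricSpace α]
    {s : Set α} {φ : α → ℝ} {u : ℕ → α} (hφ : UniformContinuousOn φ s) (hu : ∀ i, u i ∈ s)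
    (hφ0 : ∀ i, 0 ≤ φ (u i)) (hlow : ∀ ε > 0, ∃ᶠ i in atTop, φ (u i) < ε)
    (htravel : ∀ ε > 0, ∀ r > 0, ∀ᶠ m in atTop, ∀ l, m ≤ l →
      (∀ j, m ≤ j → j < l → ε ≤ φ (u j)) → dist (u l) (u m) < r) :
    Tendsto (fun i => φ (u i)) atTop (𝓝 0) := by
  refine tendsto_order.2 ⟨fun a ha => .of_forall fun i => ha.trans_le (hφ0 i), fun ε hε => ?_⟩
  by_contra hbig
  obtain ⟨r, hr, hclose⟩ := Metric.uniformContinuousOn_iff.1 hφ (ε / 2) (half_pos hε)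
  obtain ⟨m, hmε, hm⟩ :=
    ((not_eventually.1 hbig).and_eventually (htravel (ε / 2) (half_pos hε) r hr)).exists
  have hex : ∃ l, m ≤ l ∧ φ (u l) < ε / 2 := frequently_atTop.1 (hlow _ (half_pos hε)) m
  have hl := Nat.find_spec hex
  have hbetween : ∀ j, m ≤ j → j < Nat.find hex → ε / 2 ≤ φ (u j) :=
    fun j hmj hj => not_lt.1 fun hsmall => Nat.find_min hex hj ⟨hmj, hsmall⟩
  have hdist := hclose _ (hu _) _ (hu m) (hm _ hl.1 hbetween)
  rw [Real.dist_eq, abs_lt] at hdist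
  linarith [hdist.1, not_lt.1 hmε, hl.2]

namespace GAspin

variable {n : ℕ} {A : GAspin n} {ε : ℝ}

/-- Rules (a)–(e) of Algorithm 2. -/
structure IsRun (A : GAspin n) : Prop where
  norm_gt_sub_g_le : ∀ i, ‖A.gt i - A.g i‖ ≤ A.ΔL i
  norm_s_le : ∀ i, ‖A.s i‖ ≤ A.ΔG i
  neg_psi_ge : ∀ i, -(A.psi i (A.s i)) ≥ A.β₁ * min (‖A.gt i‖ ^ 2) (‖A.gt i‖ * A.ΔG i)
  u_succ_of_succ : ∀ i, A.Succ i → A.u (i + 1) = A.u i + A.s i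
  u_succ_of_not_succ : ∀ i, ¬A.Succ i → A.u (i + 1) = A.u i
  ΔG_succ_of_succ : ∀ i, A.Succ i → A.ΔG (i + 1) = A.γ₂ * A.ΔG i
  ΔG_succ_of_not_D : ∀ i, A.rho i ≥ A.η → ¬A.D i → A.ΔG (i + 1) = A.ΔG i
  ΔG_succ_of_rho_lt : ∀ i, ¬(A.rho i ≥ A.η) → A.ΔG (i + 1) = A.γ₁ * A.ΔG i
  ΔL_succ_of_D : ∀ i, A.D i → A.ΔL (i + 1) = min (A.ΔG i) (A.γ₂ * A.ΔL i)
  ΔL_succ_of_not_D : ∀ i, ¬A.D i → A.ΔL (i + 1) = min (A.ΔG i) (A.γ₁ * A.ΔL i)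

def levelSet (A : GAspin n) : Set (EuclideanSpace ℝ (Fin n)) := {v | A.J v ≤ A.J (A.u 0)}

theorem β₁_pos (A : GAspin n) : 0 < A.β₁ := A.hβ₂.trans A.hβ

theorem inner_g_eq_fderiv_apply (A : GAspin n) (i : ℕ) (v : EuclideanSpace ℝ (Fin n)) :
    ⟪A.g i, v⟫ = fderiv ℝ A.J (A.u i) v :=
  InnerProductSpace.toDual_symm_apply

theorem IsRun.neg_psi_nonneg (hA : A.IsRun) (i : ℕ) : 0 ≤ -(A.psi i (A.s i)) := by
  have := A.β₁_pos
  have := A.hΔG i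
  exact le_trans (by positivity) (hA.neg_psi_ge i)

/-- `ρ̃_i ≥ η > 0` forces `ψ̃_i(s_i) ≠ 0`, so the junk value of `x / 0` does not interfere. -/
theorem IsRun.eta_mul_neg_psi_le (hA : A.IsRun) {i : ℕ} (hρ : A.η ≤ A.rho i) :
    A.η * -(A.psi i (A.s i)) ≤ A.J (A.u i) - A.J (A.u i + A.s i) := by
  rcases (hA.neg_psi_nonneg i).eq_or_lt with h | h
  · have : A.rho i = 0 := by simp [rho, ← h]
    linarith [A.hη]
  · exact (le_div_iff₀ h).1 hρ

theorem IsRun.J_sub_J_succ_ge (hA : A.IsRun) {i : ℕ} (hi : A.Succ i) :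
    A.η * (A.β₂ * min (‖A.g i‖ ^ 2) (‖A.g i‖ * A.ΔG i)) ≤ A.J (A.u i) - A.J (A.u (i + 1)) := by
  rw [hA.u_succ_of_succ i hi]
  exact (mul_le_mul_of_nonneg_left (hi.2.le.trans (hA.neg_psi_ge i)) A.hη.le).trans
    (hA.eta_mul_neg_psi_le hi.1)

theorem IsRun.J_sub_J_succ_ge_of_le_norm (hA : A.IsRun) {i : ℕ} (hi : A.Succ i)
    (hε : 0 ≤ ε) (hg : ε ≤ ‖A.g i‖) :
    A.η * A.β₂ * min (ε ^ 2) (ε * A.ΔG i) ≤ A.J (A.u i) - A.J (A.u (i + 1)) := by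
  have := A.hη
  have := A.hβ₂
  have := A.hΔG i
  calc A.η * A.β₂ * min (ε ^ 2) (ε * A.ΔG i)
      ≤ A.η * (A.β₂ * min (‖A.g i‖ ^ 2) (‖A.g i‖ * A.ΔG i)) := by
        rw [mul_assoc]; gcongr
    _ ≤ _ := hA.J_sub_J_succ_ge hi

theorem IsRun.J_succ_le (hA : A.IsRun) (i : ℕ) : A.J (A.u (i + 1)) ≤ A.J (A.u i) := by
  by_cases hi : A.Succ i
  · have := A.hη
    have := A.hβ₂
    have := A.hΔG i
    have : 0 ≤ A.η * (A.β₂ * min (‖A.g i‖ ^ 2) (‖A.g i‖ * A.ΔG i)) := by positivity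
    linarith [hA.J_sub_J_succ_ge hi]
  · rw [hA.u_succ_of_not_succ i hi]

theorem IsRun.antitone_J (hA : A.IsRun) : Antitone fun i => A.J (A.u i) :=
  antitone_nat_of_succ_le hA.J_succ_le

theorem IsRun.u_mem_levelSet (hA : A.IsRun) (i : ℕ) : A.u i ∈ A.levelSet :=
  hA.antitone_J (Nat.zero_le i)

theorem IsRun.eventually_J_sub_J_lt (hA : A.IsRun) (hJ : Continuous A.J)
    (hK : IsCompact A.levelSet) {T : ℝ} (hT : 0 < T) :
    ∀ᶠ m in atTop, ∀ l, m ≤ l → A.J (A.u m) - A.J (A.u l) < T := by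
  have hbdd : BddBelow (Set.range fun i => A.J (A.u i)) :=
    .mono (Set.range_subset_iff.2 fun i => Set.mem_image_of_mem _ (hA.u_mem_levelSet i))
      (hK.bddBelow_image hJ.continuousOn)
  have hlim := tendsto_atTop_ciInf hA.antitone_J hbdd
  filter_upwards [hlim.eventually (gt_mem_nhds (lt_add_of_pos_right _ hT))] with m hm l _
  linarith [ciInf_le hbdd l]

theorem IsRun.ΔG_succ_le_of_not_succ (hA : A.IsRun) {i : ℕ} (hi : ¬A.Succ i) :
    A.ΔG (i + 1) ≤ A.ΔG i := by
  by_cases hρ : A.rho i ≥ A.η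
  · exact (hA.ΔG_succ_of_not_D i hρ fun hD => hi ⟨hρ, hD⟩).le
  · rw [hA.ΔG_succ_of_rho_lt i hρ]
    exact mul_le_of_le_one_left (A.hΔG i).le A.hγ₁'.le

theorem IsRun.tendsto_ΔL_zero (hA : A.IsRun) (hΔ : Tendsto A.ΔG atTop (𝓝 0)) :
    Tendsto A.ΔL atTop (𝓝 0) := by
  refine (tendsto_add_atTop_iff_nat 1).1 (squeeze_zero (fun i => (A.hΔL _).le) (fun i => ?_) hΔ)
  by_cases hD : A.D i
  · exact (hA.ΔL_succ_of_D i hD).trans_le (min_le_left _ _)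
  · exact (hA.ΔL_succ_of_not_D i hD).trans_le (min_le_left _ _)

theorem IsRun.norm_g_sub_ΔL_le (hA : A.IsRun) (i : ℕ) : ‖A.g i‖ - A.ΔL i ≤ ‖A.gt i‖ := by
  have := norm_sub_norm_le (A.g i) (A.gt i)
  rw [norm_sub_rev] at this
  linarith [hA.norm_gt_sub_g_le i]

theorem IsRun.abs_model_error_le (hA : A.IsRun) {C_B : ℝ} (hBb : ∀ i, ‖A.B i‖ ≤ C_B) (i : ℕ) :
    |A.J (A.u i + A.s i) - A.J (A.u i) - A.psi i (A.s i)| ≤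
      |A.J (A.u i + A.s i) - A.J (A.u i) - ⟪A.g i, A.s i⟫| +
        (A.ΔL i + C_B * A.ΔG i / 2) * A.ΔG i := by
  have hs := hA.norm_s_le i
  have hCB : 0 ≤ C_B := (norm_nonneg _).trans (hBb 0)
  have hgt : |⟪A.gt i - A.g i, A.s i⟫| ≤ A.ΔL i * A.ΔG i :=
    (abs_real_inner_le_norm _ _).trans
      (mul_le_mul (hA.norm_gt_sub_g_le i) hs (norm_nonneg _) (A.hΔL i).le)
  have hB : |⟪A.s i, A.B i (A.s i)⟫| ≤ C_B * A.ΔG i * A.ΔG i := calc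
    _ ≤ ‖A.s i‖ * (‖A.B i‖ * ‖A.s i‖) := (abs_real_inner_le_norm _ _).trans
          (mul_le_mul_of_nonneg_left ((A.B i).le_opNorm _) (norm_nonneg _))
    _ ≤ A.ΔG i * (C_B * A.ΔG i) := by
          have := (A.hΔG i).le
          gcongr
          exact hBb i
    _ = _ := by ring
  have hψ : A.psi i (A.s i) =
      ⟪A.g i, A.s i⟫ + ⟪A.gt i - A.g i, A.s i⟫ + 1 / 2 * ⟪A.s i, A.B i (A.s i)⟫ := by
    rw [psi, inner_sub_left]
    ring
  rw [hψ, abs_le]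
  have := abs_le.1 hgt
  have := abs_le.1 hB
  have := neg_abs_le (A.J (A.u i + A.s i) - A.J (A.u i) - ⟪A.g i, A.s i⟫)
  have := le_abs_self (A.J (A.u i + A.s i) - A.J (A.u i) - ⟪A.g i, A.s i⟫)
  constructor <;> linarith

theorem IsRun.eventually_abs_model_error_le (hA : A.IsRun) (hJ : ContDiff ℝ 1 A.J)
    (hK : IsCompact A.levelSet) {C_B : ℝ} (hBb : ∀ i, ‖A.B i‖ ≤ C_B)
    (hΔ : Tendsto A.ΔG atTop (𝓝 0)) {δ : ℝ} (hδ : 0 < δ) :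
    ∀ᶠ i in atTop, |A.J (A.u i + A.s i) - A.J (A.u i) - A.psi i (A.s i)| ≤ δ * A.ΔG i := by
  obtain ⟨r, hr, htaylor⟩ := hK.exists_forall_norm_sub_sub_fderiv_le hJ (half_pos hδ)
  have hsmall : Tendsto (fun i => A.ΔL i + C_B * A.ΔG i / 2) atTop (𝓝 0) := by
    simpa using (hA.tendsto_ΔL_zero hΔ).add ((hΔ.const_mul C_B).div_const 2)
  filter_upwards [hΔ.eventually (gt_mem_nhds hr), hsmall.eventually (ge_mem_nhds (half_pos hδ))]
    with i hΔr hsmall_i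
  have hs := hA.norm_s_le i
  have hfirst : |A.J (A.u i + A.s i) - A.J (A.u i) - ⟪A.g i, A.s i⟫| ≤ δ / 2 * A.ΔG i := by
    rw [inner_g_eq_fderiv_apply, ← Real.norm_eq_abs]
    exact (htaylor _ (hA.u_mem_levelSet i) _ (hs.trans_lt hΔr)).trans (by gcongr)
  calc _ ≤ _ := hA.abs_model_error_le hBb i
    _ ≤ δ / 2 * A.ΔG i + δ / 2 * A.ΔG i :=
        add_le_add hfirst (mul_le_mul_of_nonneg_right hsmall_i (A.hΔG i).le)
    _ = δ * A.ΔG i := by ring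

theorem IsRun.eventually_ΔG_lt_of_succ (hA : A.IsRun) (hJ : Continuous A.J)
    (hK : IsCompact A.levelSet) (hε : 0 < ε) (hg : ∀ᶠ i in atTop, ε ≤ ‖A.g i‖) {δ : ℝ}
    (hδ : 0 < δ) : ∀ᶠ i in atTop, A.Succ i → A.ΔG i < δ := by
  have := A.hη
  have := A.hβ₂
  have hT : 0 < A.η * A.β₂ * min (ε ^ 2) (ε * δ) := by positivity
  filter_upwards [hg, hA.eventually_J_sub_J_lt hJ hK hT] with i hgi hJi hi
  by_contra! hδi
  have hmin : min (ε ^ 2) (ε * δ) ≤ min (ε ^ 2) (ε * A.ΔG i) := by gcongr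
  have := mul_le_mul_of_nonneg_left hmin (by positivity : 0 ≤ A.η * A.β₂)
  linarith [hJi (i + 1) i.le_succ, hA.J_sub_J_succ_ge_of_le_norm hi hε.le hgi]

theorem IsRun.tendsto_ΔG_of_frequently_succ (hA : A.IsRun) (hJ : Continuous A.J)
    (hK : IsCompact A.levelSet) (hε : 0 < ε) (hg : ∀ᶠ i in atTop, ε ≤ ‖A.g i‖)
    (hS : ∃ᶠ i in atTop, A.Succ i) : Tendsto A.ΔG atTop (𝓝 0) := by
  refine tendsto_order.2 ⟨fun a ha => .of_forall fun i => ha.trans (A.hΔG i), fun δ hδ => ?_⟩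
  have hγ₂ : 0 < A.γ₂ := one_pos.trans A.hγ₂
  have hsmall := hA.eventually_ΔG_lt_of_succ hJ hK hε hg (div_pos hδ hγ₂)
  have hgrow : ∀ i, A.Succ i → A.ΔG i < δ / A.γ₂ → A.ΔG (i + 1) < δ := fun i hi h => by
    rw [hA.ΔG_succ_of_succ i hi]
    exact (lt_div_iff₀' hγ₂).1 h
  refine eventually_atTop_of_frequently_of_imp_succ ?_ ((tendsto_add_atTop_nat 1).frequently ?_)
  · filter_upwards [hsmall] with i hi hδi
    by_cases hS : A.Succ i
    · exact hgrow i hS (hi hS)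
    · exact (hA.ΔG_succ_le_of_not_succ hS).trans_lt hδi
  · exact (hS.and_eventually hsmall).mono fun i ⟨hi, h⟩ => hgrow i hi (h hi)

/-- If from some point on every step is rejected with `ρ̃_i ≥ η`, then `u_i` and `Δ^G_i` freeze
while `Δ^L_i → 0`, so `g̃_i → g_i`; since `β₁ > β₂`, the predicate `D_i` must then hold. -/
theorem IsRun.frequently_rho_lt (hA : A.IsRun) (hε : 0 < ε) (hg : ∀ᶠ i in atTop, ε ≤ ‖A.g i‖)
    (hS : ∀ᶠ i in atTop, ¬A.Succ i) : ∃ᶠ i in atTop, A.rho i < A.η := by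
  by_contra h
  have hnD : ∀ᶠ i in atTop, ¬A.rho i < A.η ∧ ¬A.D i :=
    ((not_frequently.1 h).and hS).mono fun i ⟨hρ, hi⟩ => ⟨hρ, fun hD => hi ⟨not_lt.1 hρ, hD⟩⟩
  obtain ⟨N, hN⟩ := eventually_atTop.1 (hnD.and hg)
  have hfrozen : ∀ j, N ≤ j → A.u j = A.u N ∧ A.ΔG j = A.ΔG N := fun j hj => by
    induction j, hj using Nat.le_induction with
    | base => exact ⟨rfl, rfl⟩
    | succ j hj ih =>
      obtain ⟨⟨hρ, hD⟩, -⟩ := hN j hj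
      rw [hA.u_succ_of_not_succ j fun hS => hD hS.2,
        hA.ΔG_succ_of_not_D j (not_lt.1 hρ) hD]
      exact ih
  have hgN : ∀ j, N ≤ j → A.g j = A.g N := fun j hj => by rw [g, g, (hfrozen j hj).1]
  have hΔL : Tendsto A.ΔL atTop (𝓝 0) := by
    have hshrink : ∀ᶠ i in atTop, A.ΔL (i + 1) ≤ A.γ₁ * A.ΔL i :=
      hnD.mono fun i hi => (hA.ΔL_succ_of_not_D i hi.2).trans_le (min_le_right _ _)
    refine tendsto_zero_of_frequently_le_mul A.hγ₁' (fun i => (A.hΔL i).le) ?_ hshrink.frequently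
    exact hshrink.mono fun i hi => hi.trans (mul_le_of_le_one_left (A.hΔL i).le A.hγ₁'.le)
  have hgt : Tendsto A.gt atTop (𝓝 (A.g N)) := by
    refine tendsto_iff_norm_sub_tendsto_zero.2 (squeeze_zero' (.of_forall fun _ => norm_nonneg _)
      (eventually_atTop.2 ⟨N, fun j hj => ?_⟩) hΔL)
    rw [← hgN j hj]
    exact hA.norm_gt_sub_g_le j
  set m := min (‖A.g N‖ ^ 2) (‖A.g N‖ * A.ΔG N)
  have hm : 0 < m := by
    have := (hN N le_rfl).2
    have := A.hΔG N
    exact lt_min (by nlinarith) (by nlinarith)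
  have hlim : Tendsto (fun j => A.β₁ * min (‖A.gt j‖ ^ 2) (‖A.gt j‖ * A.ΔG N)) atTop
      (𝓝 (A.β₁ * m)) :=
    ((hgt.norm.pow 2).min (hgt.norm.mul_const _)).const_mul _
  obtain ⟨j, hjD, hjN, hj⟩ := ((hlim.eventually_const_lt (mul_lt_mul_of_pos_right A.hβ hm)).and
    ((eventually_ge_atTop N).and hnD)).exists
  refine hj.2 ?_
  rw [D, hgN j hjN, (hfrozen j hjN).2]
  exact hjD.le

theorem IsRun.tendsto_ΔG_zero (hA : A.IsRun) (hJ : Continuous A.J) (hK : IsCompact A.levelSet)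
    (hε : 0 < ε) (hg : ∀ᶠ i in atTop, ε ≤ ‖A.g i‖) : Tendsto A.ΔG atTop (𝓝 0) := by
  by_cases hS : ∃ᶠ i in atTop, A.Succ i
  · exact hA.tendsto_ΔG_of_frequently_succ hJ hK hε hg hS
  · have hS := not_frequently.1 hS
    exact tendsto_zero_of_frequently_le_mul A.hγ₁' (fun i => (A.hΔG i).le)
      (hS.mono fun i hi => hA.ΔG_succ_le_of_not_succ hi)
      ((hA.frequently_rho_lt hε hg hS).mono fun i hi =>
        (hA.ΔG_succ_of_rho_lt i (not_le.2 hi)).le)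

theorem IsRun.eventually_ΔG_le_half_and_half_le_norm_gt (hA : A.IsRun) (hε : 0 < ε)
    (hg : ∀ᶠ i in atTop, ε ≤ ‖A.g i‖) (hΔ : Tendsto A.ΔG atTop (𝓝 0)) :
    ∀ᶠ i in atTop, A.ΔG i ≤ ε / 2 ∧ ε / 2 ≤ ‖A.gt i‖ := by
  filter_upwards [hg, hΔ.eventually (ge_mem_nhds (half_pos hε)),
    (hA.tendsto_ΔL_zero hΔ).eventually (ge_mem_nhds (half_pos hε))] with i hgi hΔi hΔLi
  exact ⟨hΔi, by linarith [hA.norm_g_sub_ΔL_le i]⟩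

theorem IsRun.eventually_D (hA : A.IsRun) (hε : 0 < ε) (hg : ∀ᶠ i in atTop, ε ≤ ‖A.g i‖)
    (hΔ : Tendsto A.ΔG atTop (𝓝 0)) : ∀ᶠ i in atTop, A.D i := by
  have hβ : 0 < (A.β₁ - A.β₂) * ε := mul_pos (sub_pos.2 A.hβ) hε
  have hΔL := ((hA.tendsto_ΔL_zero hΔ).const_mul A.β₁).eventually (gt_mem_nhds (by simpa using hβ))
  filter_upwards [hg, hA.eventually_ΔG_le_half_and_half_le_norm_gt hε hg hΔ, hΔL]
    with i hgi ⟨hΔi, hgti⟩ hΔLi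
  have hΔG := (A.hΔG i).le
  have hnorm : A.β₂ * ‖A.g i‖ ≤ A.β₁ * ‖A.gt i‖ := by
    nlinarith [hA.norm_g_sub_ΔL_le i, A.β₁_pos, A.hβ]
  show A.β₂ * min _ _ ≤ A.β₁ * min _ _
  rw [min_eq_right (b := ‖A.gt i‖ * A.ΔG i) (by nlinarith)]
  calc A.β₂ * min (‖A.g i‖ ^ 2) (‖A.g i‖ * A.ΔG i) ≤ A.β₂ * ‖A.g i‖ * A.ΔG i := by
        rw [mul_assoc]; exact mul_le_mul_of_nonneg_left (min_le_right _ _) A.hβ₂.le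
    _ ≤ A.β₁ * ‖A.gt i‖ * A.ΔG i := mul_le_mul_of_nonneg_right hnorm hΔG
    _ = _ := mul_assoc _ _ _

/-- Once `Δ^G_i` is small, `-ψ̃_i(s_i) ≥ β₁ (ε/2) Δ^G_i` while the model error is `o(Δ^G_i)`. -/
theorem IsRun.eventually_eta_le_rho (hA : A.IsRun) (hJ : ContDiff ℝ 1 A.J)
    (hK : IsCompact A.levelSet) {C_B : ℝ} (hBb : ∀ i, ‖A.B i‖ ≤ C_B) (hε : 0 < ε)
    (hg : ∀ᶠ i in atTop, ε ≤ ‖A.g i‖) (hΔ : Tendsto A.ΔG atTop (𝓝 0)) :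
    ∀ᶠ i in atTop, A.η ≤ A.rho i := by
  have hκ : 0 < A.β₁ * (ε / 2) := mul_pos A.β₁_pos (half_pos hε)
  have hη : 0 < 1 - A.η := sub_pos.2 A.hη'
  filter_upwards [hA.eventually_ΔG_le_half_and_half_le_norm_gt hε hg hΔ,
    hA.eventually_abs_model_error_le hJ hK hBb hΔ (mul_pos hη hκ)] with i ⟨hΔi, hgti⟩ herr
  have hΔG := A.hΔG i
  have hψ : A.β₁ * (ε / 2) * A.ΔG i ≤ -(A.psi i (A.s i)) := by
    refine le_trans ?_ (hA.neg_psi_ge i)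
    rw [min_eq_right (by nlinarith), mul_assoc]
    exact mul_le_mul_of_nonneg_left (by nlinarith) A.β₁_pos.le
  have hpos : 0 < -(A.psi i (A.s i)) := (by positivity : 0 < A.β₁ * (ε / 2) * A.ΔG i).trans_le hψ
  rw [rho, le_div_iff₀ hpos]
  have := (abs_le.1 herr).2
  nlinarith [mul_le_mul_of_nonneg_left hψ hη.le]

theorem IsRun.frequently_norm_g_lt (hA : A.IsRun) (hJ : ContDiff ℝ 1 A.J)
    (hK : IsCompact A.levelSet) {C_B : ℝ} (hBb : ∀ i, ‖A.B i‖ ≤ C_B) (hε : 0 < ε) :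
    ∃ᶠ i in atTop, ‖A.g i‖ < ε := by
  by_contra h
  have hg : ∀ᶠ i in atTop, ε ≤ ‖A.g i‖ := (not_frequently.1 h).mono fun _ => le_of_not_gt
  have hΔ := hA.tendsto_ΔG_zero hJ.continuous hK hε hg
  refine not_tendsto_zero_of_eventually_le_succ A.hΔG ?_ hΔ
  filter_upwards [hA.eventually_D hε hg hΔ, hA.eventually_eta_le_rho hJ hK hBb hε hg hΔ]
    with i hD hρ
  rw [hA.ΔG_succ_of_succ i ⟨hρ, hD⟩]
  exact le_mul_of_one_le_left (A.hΔG i).le A.hγ₂.le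

theorem IsRun.mul_dist_u_succ_le (hA : A.IsRun) (hε : 0 < ε) {j : ℕ} (hg : ε ≤ ‖A.g j‖)
    (hdec : A.J (A.u j) - A.J (A.u (j + 1)) < A.η * A.β₂ * ε ^ 2) :
    A.η * A.β₂ * ε * dist (A.u (j + 1)) (A.u j) ≤ A.J (A.u j) - A.J (A.u (j + 1)) := by
  by_cases hS : A.Succ j
  · have hlow := hA.J_sub_J_succ_ge_of_le_norm hS hε.le hg
    have hmin : min (ε ^ 2) (ε * A.ΔG j) = ε * A.ΔG j :=
      min_eq_right <| le_of_not_gt fun h => by rw [min_eq_left h.le] at hlow; linarith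
    have hdist : dist (A.u (j + 1)) (A.u j) = ‖A.s j‖ := by
      rw [hA.u_succ_of_succ j hS, dist_self_add_left]
    rw [hdist]
    have := A.hη
    have := A.hβ₂
    calc A.η * A.β₂ * ε * ‖A.s j‖ ≤ A.η * A.β₂ * ε * A.ΔG j := by gcongr; exact hA.norm_s_le j
      _ = A.η * A.β₂ * min (ε ^ 2) (ε * A.ΔG j) := by rw [hmin]; ring
      _ ≤ _ := hlow
  · rw [hA.u_succ_of_not_succ j hS, dist_self, mul_zero, sub_self]

theorem IsRun.eventually_dist_lt (hA : A.IsRun) (hJ : Continuous A.J) (hK : IsCompact A.levelSet)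
    (hε : 0 < ε) {r : ℝ} (hr : 0 < r) :
    ∀ᶠ m in atTop, ∀ l, m ≤ l → (∀ j, m ≤ j → j < l → ε ≤ ‖A.g j‖) →
      dist (A.u l) (A.u m) < r := by
  have hc : 0 < A.η * A.β₂ * ε := mul_pos (mul_pos A.hη A.hβ₂) hε
  filter_upwards [hA.eventually_J_sub_J_lt hJ hK (lt_min (mul_pos hc hε) (mul_pos hc hr))]
    with m hm l hml hg
  have htravel := mul_dist_le_sub_of_mul_dist_succ_le (u := A.u) hc.le hml fun j hmj hjl =>
    hA.mul_dist_u_succ_le hε (hg j hmj hjl) <| by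
      have := hm (j + 1) (hmj.trans j.le_succ)
      linarith [hA.antitone_J hmj, min_le_left (A.η * A.β₂ * ε * ε) (A.η * A.β₂ * ε * r)]
  exact lt_of_mul_lt_mul_left ((htravel.trans_lt (hm l hml)).trans_le (min_le_right _ _)) hc.le

end GAspin

theorem gaspin_gradient_tendsto_zero_general {n : ℕ} (A : GAspin n)
    (hJ : ContDiff ℝ 1 A.J)
    (hcompact : IsCompact {v : EuclideanSpace ℝ (Fin n) | A.J v ≤ A.J (A.u 0)})
    (C_B : ℝ) (hBb : ∀ i, ‖A.B i‖ ≤ C_B)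
    (ha : ∀ i, ‖A.gt i - A.g i‖ ≤ A.ΔL i)
    (hb1 : ∀ i, ‖A.s i‖ ≤ A.ΔG i)
    (hb2 : ∀ i, -(A.psi i (A.s i)) ≥ A.β₁ * min (‖A.gt i‖ ^ 2) (‖A.gt i‖ * A.ΔG i))
    (hc1 : ∀ i, A.Succ i → A.u (i + 1) = A.u i + A.s i)
    (hc2 : ∀ i, ¬A.Succ i → A.u (i + 1) = A.u i)
    (hd1 : ∀ i, A.Succ i → A.ΔG (i + 1) = A.γ₂ * A.ΔG i)
    (hd2 : ∀ i, A.rho i ≥ A.η → ¬A.D i → A.ΔG (i + 1) = A.ΔG i)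
    (hd3 : ∀ i, ¬(A.rho i ≥ A.η) → A.ΔG (i + 1) = A.γ₁ * A.ΔG i)
    (he1 : ∀ i, A.D i → A.ΔL (i + 1) = min (A.ΔG i) (A.γ₂ * A.ΔL i))
    (he2 : ∀ i, ¬A.D i → A.ΔL (i + 1) = min (A.ΔG i) (A.γ₁ * A.ΔL i)) :
    Filter.Tendsto (fun i => ‖A.g i‖) Filter.atTop (nhds 0) := by
  have hA : A.IsRun := ⟨ha, hb1, hb2, hc1, hc2, hd1, hd2, hd3, he1, he2⟩
  have hgrad : Continuous fun v => ‖gradient A.J v‖ :=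
    ((InnerProductSpace.toDual ℝ _).symm.continuous.comp (hJ.continuous_fderiv one_ne_zero)).norm
  exact tendsto_zero_of_frequently_lt_of_eventually_dist_lt (u := A.u)
    (hcompact.uniformContinuousOn_of_continuous hgrad.continuousOn) hA.u_mem_levelSet
    (fun _ => norm_nonneg _) (fun _ hε => hA.frequently_norm_g_lt hJ hcompact hBb hε)
    (fun _ hε _ hr => hA.eventually_dist_lt hJ.continuous hcompact hε hr)

/-- Theorem 6.2 of the paper: under the standard trust-region assumptions, the
globalized ASPIN iteration converges to first-order criticality,
`lim_{i→∞} ‖∇J(u_i)‖ = 0`. -/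
theorem gaspin_gradient_tendsto_zero {n : ℕ} (A : GAspin n)
    (hJ : ContDiff ℝ 1 A.J)
    (hcompact : IsCompact {v : EuclideanSpace ℝ (Fin n) | A.J v ≤ A.J (A.u 0)})
    (C_g : ℝ) (hCg : 0 < C_g)
    (hgb : ∀ v, A.J v ≤ A.J (A.u 0) → ‖gradient A.J v‖ ≤ C_g)
    (C_B : ℝ) (hCB : 0 < C_B) (hBb : ∀ i, ‖A.B i‖ ≤ C_B)
    (ha : ∀ i, ‖A.gt i - A.g i‖ ≤ A.ΔL i)
    (hb1 : ∀ i, ‖A.s i‖ ≤ A.ΔG i)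
    (hb2 : ∀ i, -(A.psi i (A.s i)) ≥ A.β₁ * min (‖A.gt i‖ ^ 2) (‖A.gt i‖ * A.ΔG i))
    (hc1 : ∀ i, A.Succ i → A.u (i + 1) = A.u i + A.s i)
    (hc2 : ∀ i, ¬A.Succ i → A.u (i + 1) = A.u i)
    (hd1 : ∀ i, A.Succ i → A.ΔG (i + 1) = A.γ₂ * A.ΔG i)
    (hd2 : ∀ i, A.rho i ≥ A.η → ¬A.D i → A.ΔG (i + 1) = A.ΔG i)
    (hd3 : ∀ i, ¬(A.rho i ≥ A.η) → A.ΔG (i + 1) = A.γ₁ * A.ΔG i)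
    (he1 : ∀ i, A.D i → A.ΔL (i + 1) = min (A.ΔG i) (A.γ₂ * A.ΔL i))
    (he2 : ∀ i, ¬A.D i → A.ΔL (i + 1) = min (A.ΔG i) (A.γ₁ * A.ΔL i)) :
    Filter.Tendsto (fun i => ‖A.g i‖) Filter.atTop (nhds 0) :=
  gaspin_gradient_tendsto_zero_general A hJ hcompact C_B hBb ha hb1 hb2 hc1 hc2 hd1 hd2 hd3 he1 he2
end

section
/- Consider the globalized ASPIN iteration described in the context, with the additional assumptions that J : ℝ^n → ℝ is continuously differentiable, the level set L = {u ∈ ℝ^n : J(u) ≤ J(u₀)} is compact, ‖∇J(u)‖ ≤ C_g on L for some C_g > 0, and ‖B_i‖ ≤ C_B for all i for some C_B > 0. Suppose there exists ε > 0 with ‖∇J(u_i)‖ ≥ ε for all i, and suppose that only finitely many iterations are successful. Then Δ_i^L → 0 and Δ_i^G → 0 as i → ∞. -/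
open RealInnerProductSpace Filter

set_option maxHeartbeats 1000000 in
/-- Intermediate claim in the proof of Theorem 6.1: if the gradient norms stay bounded
away from zero and only finitely many iterations are successful, then both
trust-region radii tend to zero. -/
theorem gaspin_radii_tendsto_zero_of_finitely_many_successful
    {n : ℕ} (A : GAspin n)
    (hJ : ContDiff ℝ 1 A.J)
    (hcompact : IsCompact {v : EuclideanSpace ℝ (Fin n) | A.J v ≤ A.J (A.u 0)})
    (C_g : ℝ) (hCg : 0 < C_g)
    (hgb : ∀ v, A.J v ≤ A.J (A.u 0) → ‖gradient A.J v‖ ≤ C_g)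
    (C_B : ℝ) (hCB : 0 < C_B) (hBb : ∀ i, ‖A.B i‖ ≤ C_B)
    (ha : ∀ i, ‖A.gt i - A.g i‖ ≤ A.ΔL i)
    (hb1 : ∀ i, ‖A.s i‖ ≤ A.ΔG i)
    (hb2 : ∀ i, -(A.psi i (A.s i)) ≥ A.β₁ * min (‖A.gt i‖ ^ 2) (‖A.gt i‖ * A.ΔG i))
    (hc1 : ∀ i, A.Succ i → A.u (i + 1) = A.u i + A.s i)
    (hc2 : ∀ i, ¬A.Succ i → A.u (i + 1) = A.u i)
    (hd1 : ∀ i, A.Succ i → A.ΔG (i + 1) = A.γ₂ * A.ΔG i)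
    (hd2 : ∀ i, A.rho i ≥ A.η → ¬A.D i → A.ΔG (i + 1) = A.ΔG i)
    (hd3 : ∀ i, ¬(A.rho i ≥ A.η) → A.ΔG (i + 1) = A.γ₁ * A.ΔG i)
    (he1 : ∀ i, A.D i → A.ΔL (i + 1) = min (A.ΔG i) (A.γ₂ * A.ΔL i))
    (he2 : ∀ i, ¬A.D i → A.ΔL (i + 1) = min (A.ΔG i) (A.γ₁ * A.ΔL i))
    (ε : ℝ) (hε : 0 < ε) (hgε : ∀ i, ‖A.g i‖ ≥ ε)
    (hfin : {i : ℕ | A.Succ i}.Finite) :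
    Filter.Tendsto A.ΔL Filter.atTop (nhds 0) ∧
      Filter.Tendsto A.ΔG Filter.atTop (nhds 0) := by
  classical
  have hβ₁pos : 0 < A.β₁ := A.hβ₂.trans A.hβ
  set θ : ℝ := Real.sqrt (A.β₂ / A.β₁) with hθdef
  have hθpos : 0 < θ := Real.sqrt_pos.2 (div_pos A.hβ₂ hβ₁pos)
  have hθlt1 : θ < 1 := by
    rw [hθdef, show (1:ℝ) = Real.sqrt 1 by simp]
    exact Real.sqrt_lt_sqrt (div_pos A.hβ₂ hβ₁pos).le ((div_lt_one hβ₁pos).2 A.hβ)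
  have hθsq : θ ^ 2 = A.β₂ / A.β₁ := Real.sq_sqrt (div_pos A.hβ₂ hβ₁pos).le
  obtain ⟨m, hm⟩ := hfin.bddAbove
  set N := m + 1 with hNdef
  have hNsucc : ∀ i, N ≤ i → ¬ A.Succ i := by
    intro i hi hs
    have := hm hs
    omega
  have hu : ∀ i, N ≤ i → A.u i = A.u N := by
    intro i hi
    induction i, hi using Nat.le_induction with
    | base => rfl
    | succ i hi ih => rw [hc2 i (hNsucc i hi), ih]
  have hg_eq : ∀ i, N ≤ i → A.g i = A.g N := by
    intro i hi
    simp only [GAspin.g, hu i hi]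
  have hmono1 : ∀ i, N ≤ i → A.ΔG (i + 1) ≤ A.ΔG i := by
    intro i hi
    by_cases hρ : A.rho i ≥ A.η
    · have hD : ¬ A.D i := fun hD => hNsucc i hi ⟨hρ, hD⟩
      rw [hd2 i hρ hD]
    · rw [hd3 i hρ]
      nlinarith [A.hΔG i, A.hγ₁, A.hγ₁']
  have hmono : ∀ i j, N ≤ i → i ≤ j → A.ΔG j ≤ A.ΔG i := by
    intro i j hNi hij
    induction j, hij using Nat.le_induction with
    | base => exact le_refl _
    | succ j hj ih => exact le_trans (hmono1 j (hNi.trans hj)) ih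
  -- infinitely many unsuccessful-ratio steps after N
  have hshrink : ∀ M, N ≤ M → ∃ j, M ≤ j ∧ ¬ (A.rho j ≥ A.η) := by
    intro M hM
    by_contra h
    push_neg at h
    have hD : ∀ j, M ≤ j → ¬ A.D j := fun j hj hDj =>
      hNsucc j (hM.trans hj) ⟨h j hj, hDj⟩
    have hLdec : ∀ k, A.ΔL (M + k) ≤ A.γ₁ ^ k * A.ΔL M := by
      intro k
      induction k with
      | zero => simp
      | succ k ih =>
        have h2 := he2 (M + k) (hD (M + k) (Nat.le_add_right _ _))
        calc A.ΔL (M + (k + 1)) = min (A.ΔG (M + k)) (A.γ₁ * A.ΔL (M + k)) := h2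
          _ ≤ A.γ₁ * A.ΔL (M + k) := min_le_right _ _
          _ ≤ A.γ₁ * (A.γ₁ ^ k * A.ΔL M) := mul_le_mul_of_nonneg_left ih A.hγ₁.le
          _ = A.γ₁ ^ (k + 1) * A.ΔL M := by ring
    set G := ‖A.g N‖ with hGdef
    have hGpos : 0 < G := lt_of_lt_of_le hε (hgε N)
    obtain ⟨k, hk⟩ := exists_pow_lt_of_lt_one
      (div_pos (mul_pos (by linarith : (0:ℝ) < 1 - θ) hGpos) (A.hΔL M)) A.hγ₁'
    have hkk : A.γ₁ ^ k * A.ΔL M < (1 - θ) * G := (lt_div_iff₀ (A.hΔL M)).1 hk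
    set j := M + k with hjdef
    have hLj : A.ΔL j < (1 - θ) * G := lt_of_le_of_lt (hLdec k) hkk
    have hgj : ‖A.g j‖ = G := by rw [hg_eq j (hM.trans (Nat.le_add_right _ _))]
    have hnear : ‖A.g j‖ - ‖A.gt j‖ ≤ A.ΔL j := by
      have h1 : ‖A.g j‖ - ‖A.gt j‖ ≤ ‖A.g j - A.gt j‖ := norm_sub_norm_le _ _
      rw [norm_sub_rev] at h1
      exact h1.trans (ha j)
    have hgt : θ * G < ‖A.gt j‖ := by
      rw [hgj] at hnear; nlinarith
    refine hD j (Nat.le_add_right _ _) ?_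
    show A.β₁ * min (‖A.gt j‖ ^ 2) (‖A.gt j‖ * A.ΔG j) ≥
      A.β₂ * min (‖A.g j‖ ^ 2) (‖A.g j‖ * A.ΔG j)
    rw [hgj]
    have hΔ := A.hΔG j
    have hθG : 0 ≤ θ * G := le_of_lt (mul_pos hθpos hGpos)
    have e1 : θ ^ 2 * G ^ 2 ≤ ‖A.gt j‖ ^ 2 := by nlinarith
    have e2 : θ ^ 2 * (G * A.ΔG j) ≤ ‖A.gt j‖ * A.ΔG j := by
      have t1 : θ * G * A.ΔG j < ‖A.gt j‖ * A.ΔG j := mul_lt_mul_of_pos_right hgt hΔ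
      have t2 : θ ^ 2 * (G * A.ΔG j) ≤ θ * G * A.ΔG j := by
        nlinarith [mul_nonneg (mul_nonneg hθpos.le hGpos.le) hΔ.le]
      linarith
    have e3 : A.β₂ * min (G ^ 2) (G * A.ΔG j) =
        A.β₁ * min (θ ^ 2 * G ^ 2) (θ ^ 2 * (G * A.ΔG j)) := by
      have hb : A.β₁ * θ ^ 2 = A.β₂ := by
        rw [hθsq]; field_simp
      rcases le_total (G ^ 2) (G * A.ΔG j) with hle | hle
      · rw [min_eq_left hle, min_eq_left (mul_le_mul_of_nonneg_left hle (sq_nonneg θ))]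
        nlinarith
      · rw [min_eq_right hle, min_eq_right (mul_le_mul_of_nonneg_left hle (sq_nonneg θ))]
        nlinarith
    calc A.β₂ * min (G ^ 2) (G * A.ΔG j)
        = A.β₁ * min (θ ^ 2 * G ^ 2) (θ ^ 2 * (G * A.ΔG j)) := e3
      _ ≤ A.β₁ * min (‖A.gt j‖ ^ 2) (‖A.gt j‖ * A.ΔG j) :=
          mul_le_mul_of_nonneg_left (min_le_min e1 e2) hβ₁pos.le
  -- geometric decay of ΔG
  have hGdecay : ∀ k, ∃ M, N ≤ M ∧ ∀ i, M ≤ i → A.ΔG i ≤ A.γ₁ ^ k * A.ΔG N := by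
    intro k
    induction k with
    | zero => exact ⟨N, le_refl N, fun i hi => by simpa using hmono N i le_rfl hi⟩
    | succ k ih =>
      obtain ⟨M, hNM, hM⟩ := ih
      obtain ⟨j, hMj, hj⟩ := hshrink M hNM
      refine ⟨j + 1, by omega, fun i hi => ?_⟩
      calc A.ΔG i ≤ A.ΔG (j + 1) := hmono (j + 1) i (by omega) hi
        _ = A.γ₁ * A.ΔG j := hd3 j hj
        _ ≤ A.γ₁ * (A.γ₁ ^ k * A.ΔG N) := mul_le_mul_of_nonneg_left (hM j hMj) A.hγ₁.le
        _ = A.γ₁ ^ (k + 1) * A.ΔG N := by ring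
  have hΔG0 : Tendsto A.ΔG atTop (nhds 0) := by
    rw [Metric.tendsto_atTop]
    intro c hc
    obtain ⟨k, hk⟩ := exists_pow_lt_of_lt_one (div_pos hc (A.hΔG N)) A.hγ₁'
    obtain ⟨M, _, hM⟩ := hGdecay k
    refine ⟨M, fun i hi => ?_⟩
    rw [Real.dist_eq, sub_zero, abs_of_pos (A.hΔG i)]
    have h1 := hM i hi
    have h2 : A.γ₁ ^ k * A.ΔG N < c := (lt_div_iff₀ (A.hΔG N)).1 hk
    linarith
  have hLle : ∀ i, A.ΔL (i + 1) ≤ A.ΔG i := by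
    intro i
    by_cases hD : A.D i
    · rw [he1 i hD]; exact min_le_left _ _
    · rw [he2 i hD]; exact min_le_left _ _
  have hΔL0 : Tendsto A.ΔL atTop (nhds 0) := by
    have h' : Tendsto (fun i => A.ΔL (i + 1)) atTop (nhds 0) :=
      squeeze_zero (fun i => (A.hΔL _).le) hLle hΔG0
    exact (tendsto_add_atTop_iff_nat 1).1 h'
  exact ⟨hΔL0, hΔG0⟩
end
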